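/- arXiv:2307.00949 — 7 statements merged into one kernel-verified Lean document; each statement's English description precedes it below -/
import Mathlib

section
/- For every feasible schedule S there exists a feasible schedule S' with cost(S') ≤ cost(S) that fulfills the stair property: for every time slot t ∈ T, if processor k is busy at t in S', then every processor k' ≤ k is busy at t in S'. Consequently, if the instance admits a feasible schedule, then there exists a feasible schedule of cost exactly OPT that fulfills the stair property. -/
open Finset

/-- Execution interval of job `j`: the slots between its release time and deadline. -/
def Ei {J : Type} (r dl : J → ℕ) (j : J) : Finset ℕ := Finset.Icc (r j) (dl j)

/-- The time horizon `T = {0, …, d}`, where `d` is the maximal deadline. -/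
def Tslots {J : Type} [Fintype J] (dl : J → ℕ) : Finset ℕ :=
  Finset.Icc 0 (Finset.univ.sup dl)

/-- A schedule assigns to each processor and slot at most one job; it is feasible if
every job `j` is assigned to exactly `p j` processor/slot pairs, all of whose slots lie
in `E j`, and no job is assigned to two different processors at the same slot. -/
def Feasible {J : Type} [Fintype J] [DecidableEq J] (r dl p : J → ℕ) (m : ℕ)
    (S : Fin m → ℕ → Option J) : Prop :=
  (∀ (k : Fin m) (t : ℕ) (j : J), S k t = some j → t ∈ Ei r dl j) ∧
  (∀ j : J, ((Finset.univ ×ˢ Tslots dl).filter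
      (fun kt : Fin m × ℕ => S kt.1 kt.2 = some j)).card = p j) ∧
  (∀ (t : ℕ) (j : J) (k k' : Fin m), S k t = some j → S k' t = some j → k = k')

/-- The set of slots (within the time horizon) at which processor `k` is busy. -/
def busySet {J : Type} [Fintype J] (dl : J → ℕ) {m : ℕ}
    (S : Fin m → ℕ → Option J) (k : Fin m) : Finset ℕ :=
  (Tslots dl).filter (fun t => (S k t).isSome)

/-- The number of maximal runs of consecutive integers forming `N`. -/
def runs (N : Finset ℕ) : ℕ := (N.filter (fun t => t = 0 ∨ t - 1 ∉ N)).card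

/-- Energy of an on/off assignment `N`: its size plus `q` per maximal run. -/
noncomputable def energy (q : ℝ) (N : Finset ℕ) : ℝ := (N.card : ℝ) + q * (runs N : ℝ)

/-- Cost of a processor whose busy slots are `B`: the minimal energy over all on/off
assignments `N` with `B ⊆ N ⊆ T`. -/
noncomputable def procCost (q : ℝ) (Ttot B : Finset ℕ) : ℝ :=
  sInf { e : ℝ | ∃ N : Finset ℕ, B ⊆ N ∧ N ⊆ Ttot ∧ e = energy q N }

/-- Cost of a schedule: the sum of the processor costs. -/
noncomputable def cost {J : Type} [Fintype J] (q : ℝ) (dl : J → ℕ) {m : ℕ}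
    (S : Fin m → ℕ → Option J) : ℝ :=
  ∑ k : Fin m, procCost q (Tslots dl) (busySet dl S k)

/-- The optimal cost over all feasible schedules. -/
noncomputable def OPT {J : Type} [Fintype J] [DecidableEq J] (q : ℝ)
    (r dl p : J → ℕ) (m : ℕ) : ℝ :=
  sInf { c : ℝ | ∃ S : Fin m → ℕ → Option J, Feasible r dl p m S ∧ c = cost q dl S }

/-- The stair property: at every slot, if processor `k` is busy then so is every
processor `k' ≤ k`. -/
def Stair {J : Type} {m : ℕ} (S : Fin m → ℕ → Option J) : Prop :=
  ∀ (t : ℕ) (k k' : Fin m), (S k t).isSome → k' ≤ k → (S k' t).isSome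

/-! ### Auxiliary lemmas -/

lemma runs_eq_sum {N U : Finset ℕ} (h : N ⊆ U) :
    runs N = ∑ t ∈ U, (if t ∈ N ∧ (t = 0 ∨ t - 1 ∉ N) then 1 else 0) := by
  rw [runs, Finset.card_filter]
  rw [← Finset.sum_subset h (fun t _ ht' => by simp [ht'])]
  exact Finset.sum_congr rfl (fun t ht => by simp [ht])

lemma runs_submod (N M : Finset ℕ) :
    runs (N ∪ M) + runs (N ∩ M) ≤ runs N + runs M := by
  rw [runs_eq_sum (U := N ∪ M) subset_rfl,
      runs_eq_sum (U := N ∪ M) inter_subset_union,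
      runs_eq_sum (U := N ∪ M) Finset.subset_union_left,
      runs_eq_sum (U := N ∪ M) Finset.subset_union_right,
      ← Finset.sum_add_distrib, ← Finset.sum_add_distrib]
  apply Finset.sum_le_sum
  intro t _
  by_cases h0 : t = 0 <;> by_cases hN : t ∈ N <;> by_cases hM : t ∈ M <;>
    by_cases hN' : t - 1 ∈ N <;> by_cases hM' : t - 1 ∈ M <;>
    simp [h0, hN, hM, hN', hM'] <;> simp_all

lemma energy_nonneg {q : ℝ} (hq : 0 ≤ q) (N : Finset ℕ) : 0 ≤ energy q N := by
  unfold energy; positivity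

lemma energy_submod {q : ℝ} (hq : 0 ≤ q) (N M : Finset ℕ) :
    energy q (N ∪ M) + energy q (N ∩ M) ≤ energy q N + energy q M := by
  unfold energy
  have h1 : (N ∪ M).card + (N ∩ M).card = N.card + M.card :=
    Finset.card_union_add_card_inter N M
  have h2 := runs_submod N M
  have h1' : ((N ∪ M).card : ℝ) + ((N ∩ M).card : ℝ) = (N.card : ℝ) + (M.card : ℝ) := by
    exact_mod_cast congrArg (Nat.cast (R := ℝ)) h1
  have h2' : ((runs (N ∪ M) : ℝ) + (runs (N ∩ M) : ℝ)) ≤ (runs N : ℝ) + (runs M : ℝ) := by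
    exact_mod_cast h2
  nlinarith

lemma costSet_finite (q : ℝ) (T B : Finset ℕ) :
    { e : ℝ | ∃ N : Finset ℕ, B ⊆ N ∧ N ⊆ T ∧ e = energy q N }.Finite := by
  have : { e : ℝ | ∃ N : Finset ℕ, B ⊆ N ∧ N ⊆ T ∧ e = energy q N }
      ⊆ (energy q) '' {N : Finset ℕ | N ∈ T.powerset} := by
    rintro e ⟨N, h1, h2, rfl⟩
    exact ⟨N, by simpa using h2, rfl⟩
  exact Set.Finite.subset (Set.Finite.image _ (T.powerset.finite_toSet)) this

lemma procCost_le {q : ℝ} {T B N : Finset ℕ} (hBN : B ⊆ N) (hNT : N ⊆ T) :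
    procCost q T B ≤ energy q N :=
  csInf_le (Set.Finite.bddBelow (costSet_finite q T B)) ⟨N, hBN, hNT, rfl⟩

lemma procCost_attained {q : ℝ} {T B : Finset ℕ} (hBT : B ⊆ T) :
    ∃ N : Finset ℕ, B ⊆ N ∧ N ⊆ T ∧ procCost q T B = energy q N := by
  have hne : { e : ℝ | ∃ N : Finset ℕ, B ⊆ N ∧ N ⊆ T ∧ e = energy q N }.Nonempty :=
    ⟨energy q T, T, hBT, subset_rfl, rfl⟩
  exact hne.csInf_mem (costSet_finite q T B)

lemma procCost_submod {q : ℝ} (hq : 0 ≤ q) {T B C : Finset ℕ} (hB : B ⊆ T) (hC : C ⊆ T) :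
    procCost q T (B ∪ C) + procCost q T (B ∩ C) ≤ procCost q T B + procCost q T C := by
  obtain ⟨N, hBN, hNT, hN⟩ := procCost_attained (q := q) hB
  obtain ⟨M, hCM, hMT, hM⟩ := procCost_attained (q := q) hC
  have h1 : procCost q T (B ∪ C) ≤ energy q (N ∪ M) :=
    procCost_le (Finset.union_subset_union hBN hCM) (Finset.union_subset hNT hMT)
  have h2 : procCost q T (B ∩ C) ≤ energy q (N ∩ M) :=
    procCost_le (Finset.inter_subset_inter hBN hCM) ((Finset.inter_subset_left).trans hNT)
  have := energy_submod hq N M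
  linarith

lemma dc_iff {m : ℕ} {A : Finset (Fin m)} (h : ∀ i j : Fin m, i ≤ j → j ∈ A → i ∈ A)
    (i : Fin m) : i ∈ A ↔ (i : ℕ) < A.card := by
  constructor
  · intro hi
    have hsub : Finset.Iic i ⊆ A := fun j hj => h j i (Finset.mem_Iic.mp hj) hi
    have := Finset.card_le_card hsub
    rw [Fin.card_Iic] at this; omega
  · intro hi
    by_contra hni
    have hsub : A ⊆ Finset.Iio i := by
      intro j hj
      rw [Finset.mem_Iio]
      rcases lt_or_ge j i with h'|h'
      · exact h'
      · exact absurd (h i j h' hj) hni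
    have := Finset.card_le_card hsub
    rw [Fin.card_Iio] at this; omega

lemma sum_pair_split {α β : Type*} [DecidableEq α] [Fintype α] [AddCommMonoid β]
    (i j : α) (hij : i ≠ j) (f : α → β) :
    ∑ k : α, f k = f i + f j + ∑ k ∈ Finset.univ \ {i, j}, f k := by
  rw [← Finset.sum_sdiff (Finset.subset_univ {i, j}), Finset.sum_pair hij]
  abel

/-- Number of sets in the family containing slot `t`. -/
def lcount {m : ℕ} (B : Fin m → Finset ℕ) (t : ℕ) : ℕ :=
  (Finset.univ.filter (fun i : Fin m => t ∈ B i)).card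

/-- The `k`-th level set of a family of busy sets. -/
def levelSet (T : Finset ℕ) {m : ℕ} (B : Fin m → Finset ℕ) (k : Fin m) : Finset ℕ :=
  T.filter (fun t => (k : ℕ) < lcount B t)

lemma stair_level_eq {T : Finset ℕ} {m : ℕ} {B : Fin m → Finset ℕ}
    (hst : ∀ i j : Fin m, i ≤ j → B j ⊆ B i) (hBT : ∀ k, B k ⊆ T) (k : Fin m) :
    levelSet T B k = B k := by
  ext t
  have hdc : ∀ i j : Fin m, i ≤ j → j ∈ Finset.univ.filter (fun i : Fin m => t ∈ B i) →
      i ∈ Finset.univ.filter (fun i : Fin m => t ∈ B i) := by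
    intro i j hij hj
    simp only [Finset.mem_filter, Finset.mem_univ, true_and] at *
    exact hst i j hij hj
  have := dc_iff hdc k
  simp only [Finset.mem_filter, Finset.mem_univ, true_and] at this
  simp only [levelSet, Finset.mem_filter]
  constructor
  · rintro ⟨_, h⟩; exact this.mpr h
  · intro h; exact ⟨hBT k h, this.mp h⟩

lemma polar {q : ℝ} (hq : 0 ≤ q) (T : Finset ℕ) {m : ℕ} :
    ∀ (n : ℕ) (B : Fin m → Finset ℕ), (∑ k : Fin m, (k : ℕ) * (B k).card) ≤ n →
    (∀ k, B k ⊆ T) →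
    ∑ k : Fin m, procCost q T (levelSet T B k) ≤ ∑ k : Fin m, procCost q T (B k) := by
  intro n
  induction n with
  | zero =>
    intro B hμ hBT
    by_cases hst : ∀ i j : Fin m, i ≤ j → B j ⊆ B i
    · exact le_of_eq (Finset.sum_congr rfl fun k _ => by rw [stair_level_eq hst hBT])
    · exfalso
      push_neg at hst
      obtain ⟨i, j, hij, hns⟩ := hst
      have hilj : i < j := lt_of_le_of_ne hij (by rintro rfl; exact hns subset_rfl)
      have hjpos : (1:ℕ) ≤ (j:ℕ) := by
        have : (i:ℕ) < (j:ℕ) := hilj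
        omega
      obtain ⟨x, hxj, _⟩ := Finset.not_subset.mp hns
      have hcard : 1 ≤ (B j).card := Finset.card_pos.mpr ⟨x, hxj⟩
      have : (j:ℕ) * (B j).card ≤ ∑ k : Fin m, (k : ℕ) * (B k).card :=
        Finset.single_le_sum (f := fun k : Fin m => (k : ℕ) * (B k).card)
          (fun k _ => Nat.zero_le _) (Finset.mem_univ j)
      have : 1 ≤ ∑ k : Fin m, (k : ℕ) * (B k).card := le_trans (by nlinarith) this
      omega
  | succ n IH =>
    intro B hμ hBT
    by_cases hst : ∀ i j : Fin m, i ≤ j → B j ⊆ B i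
    · exact le_of_eq (Finset.sum_congr rfl fun k _ => by rw [stair_level_eq hst hBT])
    · push_neg at hst
      obtain ⟨i, j, hij, hns⟩ := hst
      have hne : i ≠ j := by rintro rfl; exact hns subset_rfl
      have hilj : (i:ℕ) < (j:ℕ) := Fin.lt_iff_val_lt_val.mp (lt_of_le_of_ne hij hne)
      set B' : Fin m → Finset ℕ :=
        Function.update (Function.update B i (B i ∪ B j)) j (B i ∩ B j) with hB'
      have hB'i : B' i = B i ∪ B j := by
        rw [hB', Function.update_of_ne hne, Function.update_self]
      have hB'j : B' j = B i ∩ B j := by rw [hB', Function.update_self]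
      have hB'k : ∀ k, k ≠ i → k ≠ j → B' k = B k := by
        intro k hki hkj
        rw [hB', Function.update_of_ne hkj, Function.update_of_ne hki]
      have hB'T : ∀ k, B' k ⊆ T := by
        intro k
        by_cases h1 : k = i
        · rw [h1, hB'i]; exact Finset.union_subset (hBT i) (hBT j)
        by_cases h2 : k = j
        · rw [h2, hB'j]; exact (Finset.inter_subset_left).trans (hBT i)
        · rw [hB'k k h1 h2]; exact hBT k
      have hcount : ∀ t, lcount B' t = lcount B t := by
        intro t
        unfold lcount
        rw [Finset.card_filter, Finset.card_filter,
          sum_pair_split i j hne, sum_pair_split i j hne]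
        have h1 : ((if t ∈ B' i then 1 else 0) + if t ∈ B' j then 1 else 0)
            = ((if t ∈ B i then 1 else 0) + if t ∈ B j then 1 else 0) := by
          rw [hB'i, hB'j]
          by_cases h1 : t ∈ B i <;> by_cases h2 : t ∈ B j <;> simp [h1, h2]
        rw [h1]
        congr 1
        apply Finset.sum_congr rfl
        intro k hk
        simp only [Finset.mem_sdiff, Finset.mem_insert, Finset.mem_singleton] at hk
        rw [hB'k k (fun h => hk.2 (Or.inl h)) (fun h => hk.2 (Or.inr h))]
      have hlevel : ∀ k, levelSet T B' k = levelSet T B k := by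
        intro k; unfold levelSet; apply Finset.filter_congr; intro t _; rw [hcount]
      have hmeas : (∑ k : Fin m, (k : ℕ) * (B' k).card) ≤ n := by
        have hlt : (i:ℕ) * (B' i).card + (j:ℕ) * (B' j).card
            < (i:ℕ) * (B i).card + (j:ℕ) * (B j).card := by
          rw [hB'i, hB'j]
          have hu : (B i ∪ B j).card + (B i ∩ B j).card = (B i).card + (B j).card :=
            Finset.card_union_add_card_inter _ _
          have hv : (B i ∩ B j).card < (B j).card := by
            apply Finset.card_lt_card
            constructor
            · exact Finset.inter_subset_right
            · intro hsub
              exact hns (fun x hx => (Finset.mem_inter.mp (hsub hx)).1)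
          nlinarith
        have hsplit := sum_pair_split i j hne (fun k => (k : ℕ) * (B' k).card)
        have hsplit2 := sum_pair_split i j hne (fun k => (k : ℕ) * (B k).card)
        have hrest : ∑ k ∈ Finset.univ \ {i, j}, (k : ℕ) * (B' k).card
            = ∑ k ∈ Finset.univ \ {i, j}, (k : ℕ) * (B k).card := by
          apply Finset.sum_congr rfl
          intro k hk
          simp only [Finset.mem_sdiff, Finset.mem_insert, Finset.mem_singleton] at hk
          rw [hB'k k (fun h => hk.2 (Or.inl h)) (fun h => hk.2 (Or.inr h))]
        omega
      have hcost : ∑ k : Fin m, procCost q T (B' k) ≤ ∑ k : Fin m, procCost q T (B k) := by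
        rw [sum_pair_split i j hne, sum_pair_split i j hne (fun k => procCost q T (B k))]
        have hrest : ∑ k ∈ Finset.univ \ {i, j}, procCost q T (B' k)
            = ∑ k ∈ Finset.univ \ {i, j}, procCost q T (B k) := by
          apply Finset.sum_congr rfl
          intro k hk
          simp only [Finset.mem_sdiff, Finset.mem_insert, Finset.mem_singleton] at hk
          rw [hB'k k (fun h => hk.2 (Or.inl h)) (fun h => hk.2 (Or.inr h))]
        rw [hrest, hB'i, hB'j]
        have := procCost_submod hq (hBT i) (hBT j)
        linarith
      calc ∑ k : Fin m, procCost q T (levelSet T B k)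
          = ∑ k : Fin m, procCost q T (levelSet T B' k) := by
            exact Finset.sum_congr rfl fun k _ => by rw [hlevel]
        _ ≤ ∑ k : Fin m, procCost q T (B' k) := IH B' hmeas hB'T
        _ ≤ ∑ k : Fin m, procCost q T (B k) := hcost

lemma exists_sort_perm {J : Type} {m : ℕ} (S : Fin m → ℕ → Option J) (t : ℕ) :
    ∃ σ : Equiv.Perm (Fin m), ∀ i : Fin m,
      (S (σ i) t).isSome ↔ (i : ℕ) < (Finset.univ.filter (fun k : Fin m => (S k t).isSome)).card := by
  classical
  set c := (Finset.univ.filter (fun k : Fin m => (S k t).isSome)).card with hc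
  have hcm : c ≤ m := by
    rw [hc]
    calc _ ≤ (Finset.univ : Finset (Fin m)).card := Finset.card_le_card (Finset.filter_subset _ _)
      _ = m := Finset.card_univ.trans (Fintype.card_fin m)
  set P : Fin m → Prop := fun i => (i : ℕ) < c with hP
  set Q : Fin m → Prop := fun k => (S k t).isSome with hQ
  have e0 : {i : Fin m // P i} ≃ Fin c :=
    { toFun := fun i => ⟨i.1, i.2⟩
      invFun := fun j => ⟨⟨j.1, lt_of_lt_of_le j.2 hcm⟩, j.2⟩
      left_inv := fun i => rfl
      right_inv := fun j => rfl }
  have hcardP : Fintype.card {i : Fin m // P i} = c := by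
    rw [Fintype.card_congr e0, Fintype.card_fin]
  have hcardQ : Fintype.card {k : Fin m // Q k} = c := by
    rw [Fintype.card_subtype]
  have e1 : {i : Fin m // P i} ≃ {k : Fin m // Q k} :=
    Fintype.equivOfCardEq (by rw [hcardP, hcardQ])
  have e2 : {i : Fin m // ¬ P i} ≃ {k : Fin m // ¬ Q k} := by
    apply Fintype.equivOfCardEq
    rw [Fintype.card_subtype_compl, Fintype.card_subtype_compl, hcardP, hcardQ]
  refine ⟨(Equiv.sumCompl P).symm.trans ((Equiv.sumCongr e1 e2).trans (Equiv.sumCompl Q)), ?_⟩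
  intro i
  by_cases h : P i
  · simp only [Equiv.trans_apply]
    rw [Equiv.sumCompl_symm_apply_of_pos (p := P) h]
    simp only [Equiv.sumCongr_apply, Sum.map_inl, Equiv.sumCompl_apply_inl]
    exact iff_of_true (e1 ⟨i, h⟩).2 h
  · simp only [Equiv.trans_apply]
    rw [Equiv.sumCompl_symm_apply_of_neg (p := P) h]
    simp only [Equiv.sumCongr_apply, Sum.map_inr, Equiv.sumCompl_apply_inr]
    exact iff_of_false (e2 ⟨i, h⟩).2 h

/-- Part 1: sorting a feasible schedule. -/
lemma sort_schedule {J : Type} [Fintype J] [DecidableEq J]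
    (r dl p : J → ℕ) (m : ℕ) (q : ℝ) (hq : 0 ≤ q)
    (S : Fin m → ℕ → Option J) (hS : Feasible r dl p m S) :
    ∃ S' : Fin m → ℕ → Option J, Feasible r dl p m S' ∧
      cost q dl S' ≤ cost q dl S ∧ Stair S' := by
  classical
  obtain ⟨h1, h2, h3⟩ := hS
  choose σ hσ using fun t => exists_sort_perm S t
  set c : ℕ → ℕ := fun t => (Finset.univ.filter (fun k : Fin m => (S k t).isSome)).card with hcdef
  set S' : Fin m → ℕ → Option J := fun i t => S (σ t i) t with hS'def
  have hS'some : ∀ i t, (S' i t).isSome ↔ (i : ℕ) < c t := fun i t => hσ t i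
  have hfeas : Feasible r dl p m S' := by
    refine ⟨?_, ?_, ?_⟩
    · intro k t j h
      exact h1 _ t j h
    · intro j
      rw [← h2 j]
      apply Finset.card_bij' (i := fun kt _ => ((σ kt.2) kt.1, kt.2))
        (j := fun kt _ => ((σ kt.2).symm kt.1, kt.2))
      · intro a ha
        rw [Finset.mem_filter, Finset.mem_product] at ha ⊢
        exact ⟨⟨Finset.mem_univ _, ha.1.2⟩, ha.2⟩
      · intro a ha
        rw [Finset.mem_filter, Finset.mem_product] at ha ⊢
        refine ⟨⟨Finset.mem_univ _, ha.1.2⟩, ?_⟩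
        show S (σ a.2 ((σ a.2).symm a.1)) a.2 = some j
        rw [Equiv.apply_symm_apply]
        exact ha.2
      · intro a _
        simp
      · intro a _
        simp
    · intro t j k k' hk hk'
      have := h3 t j (σ t k) (σ t k') hk hk'
      exact (σ t).injective this
  have hstair : Stair S' := by
    intro t k k' hk hkk'
    rw [hS'some] at *
    have : (k' : ℕ) ≤ (k : ℕ) := hkk'
    omega
  have hbusy : ∀ k, busySet dl S' k = levelSet (Tslots dl) (busySet dl S) k := by
    intro k
    ext t
    simp only [busySet, levelSet, lcount, Finset.mem_filter]
    constructor
    · rintro ⟨ht, hsome⟩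
      refine ⟨ht, ?_⟩
      rw [hS'some] at hsome
      have hcc : (Finset.univ.filter
          (fun i : Fin m => t ∈ Tslots dl ∧ (S i t).isSome)).card = c t := by
        rw [hcdef]
        congr 1
        apply Finset.filter_congr
        intro i _
        simp [ht]
      rw [hcc]
      exact hsome
    · rintro ⟨ht, hlt⟩
      refine ⟨ht, ?_⟩
      rw [hS'some]
      have hcc : (Finset.univ.filter
          (fun i : Fin m => t ∈ Tslots dl ∧ (S i t).isSome)).card = c t := by
        rw [hcdef]
        congr 1
        apply Finset.filter_congr
        intro i _
        simp [ht]
      rw [hcc] at hlt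
      exact hlt
  refine ⟨S', hfeas, ?_, hstair⟩
  unfold cost
  calc ∑ k : Fin m, procCost q (Tslots dl) (busySet dl S' k)
      = ∑ k : Fin m, procCost q (Tslots dl) (levelSet (Tslots dl) (busySet dl S) k) := by
        exact Finset.sum_congr rfl fun k _ => by rw [hbusy]
    _ ≤ ∑ k : Fin m, procCost q (Tslots dl) (busySet dl S k) :=
        polar hq (Tslots dl) (∑ k : Fin m, (k : ℕ) * (busySet dl S k).card) _ le_rfl
          (fun k => Finset.filter_subset _ _)

/-- For every feasible schedule `S` there is a feasible schedule `S'` of no larger cost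
fulfilling the stair property; consequently, if the instance is feasible, some feasible
schedule of cost exactly `OPT` fulfills the stair property. -/
theorem stair_property_opt (J : Type) [Fintype J] [DecidableEq J]
    (r dl p : J → ℕ) (hrd : ∀ j, r j ≤ dl j) (hp : ∀ j, p j ≤ dl j - r j + 1)
    (m : ℕ) (hm : 1 ≤ m) (q : ℝ) (hq : 0 ≤ q) :
    (∀ S : Fin m → ℕ → Option J, Feasible r dl p m S →
      ∃ S' : Fin m → ℕ → Option J, Feasible r dl p m S' ∧
        cost q dl S' ≤ cost q dl S ∧ Stair S') ∧
    ((∃ S : Fin m → ℕ → Option J, Feasible r dl p m S) →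
      ∃ S' : Fin m → ℕ → Option J, Feasible r dl p m S' ∧
        cost q dl S' = OPT q r dl p m ∧ Stair S') := by
  classical
  constructor
  · intro S hS
    exact sort_schedule r dl p m q hq S hS
  · rintro ⟨S, hS⟩
    -- the set of costs of feasible schedules is finite and nonempty
    set 𝒮 := { c : ℝ | ∃ S : Fin m → ℕ → Option J, Feasible r dl p m S ∧ c = cost q dl S }
      with h𝒮
    have hfin : 𝒮.Finite := by
      have hsub : 𝒮 ⊆ (fun f : Fin m → Finset ℕ =>
          ∑ k : Fin m, procCost q (Tslots dl) (f k)) ''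
          (Set.univ.pi (fun _ : Fin m => {s : Finset ℕ | s ∈ (Tslots dl).powerset})) := by
        rintro x ⟨S₀, hS₀, rfl⟩
        refine ⟨fun k => busySet dl S₀ k, ?_, rfl⟩
        intro k _
        simp only [Set.mem_setOf_eq, Finset.mem_powerset]
        exact Finset.filter_subset _ _
      refine Set.Finite.subset (Set.Finite.image _ (Set.Finite.pi ?_)) hsub
      intro _
      exact (Tslots dl).powerset.finite_toSet
    have hne : 𝒮.Nonempty := ⟨cost q dl S, S, hS, rfl⟩
    have hmem : OPT q r dl p m ∈ 𝒮 := hne.csInf_mem hfin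
    obtain ⟨S₀, hS₀, hcost₀⟩ := hmem
    obtain ⟨S', hfeas', hle, hstair⟩ := sort_schedule r dl p m q hq S₀ hS₀
    refine ⟨S', hfeas', ?_, hstair⟩
    have hge : OPT q r dl p m ≤ cost q dl S' :=
      csInf_le (Set.Finite.bddBelow hfin) ⟨S', hfeas', rfl⟩
    rw [← hcost₀] at hle
    linarith
end

section
/- An instance of deadline-scheduling-with-processor-bounds with Σ_{t∈T} l_t ≤ P admits a feasible solution if and only if the associated flow network admits an integral α-ω flow of value P. -/
open Finset

/-- Number of processors busy at slot `t` in schedule `S`. -/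
def volT {J : Type} [DecidableEq J] {m : ℕ} (S : Fin m → ℕ → Option J) (t : ℕ) : ℕ :=
  (Finset.univ.filter (fun k : Fin m => (S k t).isSome)).card

/-- Number of slots of `Q` at which job `j` is scheduled in `S`. -/
def volJ {J : Type} [DecidableEq J] {m : ℕ} (S : Fin m → ℕ → Option J) (j : J)
    (Q : Finset ℕ) : ℕ :=
  (Q.filter (fun t => ∃ k, S k t = some j)).card

/-- Total volume scheduled in `Q` by `S`. -/
def volQ {J : Type} [Fintype J] [DecidableEq J] {m : ℕ} (S : Fin m → ℕ → Option J)
    (Q : Finset ℕ) : ℕ :=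
  ∑ j, volJ S j Q

/-- Forced volume of job `j` in `Q`: `max {0, p j − |E j \ Q|}`. -/
def fvJ {J : Type} (r dl p : J → ℕ) (j : J) (Q : Finset ℕ) : ℕ :=
  p j - (Ei r dl j \ Q).card

/-- Total forced volume in `Q`. -/
def fvQ {J : Type} [Fintype J] (r dl p : J → ℕ) (Q : Finset ℕ) : ℕ :=
  ∑ j, fvJ r dl p j Q

/-- Possible volume of job `j` in `Q`: `min {p j, |E j ∩ Q|}`. -/
def pvJ {J : Type} (r dl p : J → ℕ) (j : J) (Q : Finset ℕ) : ℕ :=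
  min (p j) ((Ei r dl j) ∩ Q).card

/-- Total possible volume in `Q`. -/
def pvQ {J : Type} [Fintype J] (r dl p : J → ℕ) (Q : Finset ℕ) : ℕ :=
  ∑ j, pvJ r dl p j Q


section Helpers

variable {J : Type} [DecidableEq J]

/-- Key counting lemma: number of indices `k : Fin m` at which `s.toList` has value `j`. -/
lemma keyCount (m : ℕ) (s : Finset J) (hs : s.card ≤ m) (j : J) :
    (Finset.univ.filter fun k : Fin m => s.toList[(k : ℕ)]? = some j).card
      = if j ∈ s then 1 else 0 := by
  by_cases hj : j ∈ s
  · simp only [hj, if_true]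
    have hmem : j ∈ s.toList := Finset.mem_toList.mpr hj
    obtain ⟨n, hn⟩ := List.mem_iff_getElem?.mp hmem
    have hlen : n < s.toList.length := by
      rcases List.getElem?_eq_some_iff.mp hn with ⟨h, _⟩; exact h
    have hnm : n < m := lt_of_lt_of_le (by rwa [Finset.length_toList] at hlen) hs
    rw [Finset.card_eq_one]
    refine ⟨⟨n, hnm⟩, ?_⟩
    ext k
    simp only [Finset.mem_filter, Finset.mem_univ, true_and, Finset.mem_singleton]
    constructor
    · intro hk
      have hklen : (k : ℕ) < s.toList.length := by
        rcases List.getElem?_eq_some_iff.mp hk with ⟨h, _⟩; exact h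
      exact Fin.ext ((List.getElem?_inj hklen (Finset.nodup_toList s)).mp (hk.trans hn.symm))
    · rintro rfl; exact hn
  · simp only [hj, if_false, Finset.card_eq_zero]
    rw [Finset.filter_eq_empty_iff]
    intro k _ hk
    exact hj (Finset.mem_toList.mp (List.mem_iff_getElem?.mpr ⟨k, hk⟩))

lemma cardFinLt (m n : ℕ) (h : n ≤ m) :
    (Finset.univ.filter fun k : Fin m => (k : ℕ) < n).card = n := by
  rw [Finset.card_filter, Fin.sum_univ_eq_sum_range (fun i => if i < n then 1 else 0)]
  rw [← Finset.card_filter]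
  have : (Finset.range m).filter (fun i => i < n) = Finset.range n := by
    ext i; simp only [Finset.mem_filter, Finset.mem_range]; omega
  rw [this, Finset.card_range]

end Helpers

/-- An instance of deadline-scheduling-with-processor-bounds (with `Σ_t l_t ≤ P`) admits
a feasible solution if and only if the associated flow network admits an integral
`α`-`ω` flow of value `P`.  The flow is encoded by its values on the edges of the
network: `fau j` on `(α,u_j)`, `fut j t` on `(u_j,v_t)`, `ftg t` on `(v_t,γ)`,
`ftw t` on `(v_t,ω)` and `fgw` on `(γ,ω)`. -/
theorem flow_feasibility (J : Type) [Fintype J] [DecidableEq J]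
    (r dl p : J → ℕ) (hrd : ∀ j, r j ≤ dl j) (hp : ∀ j, p j ≤ dl j - r j + 1)
    (m : ℕ) (hm : 1 ≤ m)
    (lb mb : ℕ → ℕ)
    (hlm : ∀ t ∈ Tslots dl, lb t ≤ mb t) (hmb : ∀ t ∈ Tslots dl, mb t ≤ m)
    (hlP : ∑ t ∈ Tslots dl, lb t ≤ ∑ j, p j) :
    (∃ S : Fin m → ℕ → Option J, Feasible r dl p m S ∧
      ∀ t ∈ Tslots dl, lb t ≤ volT S t ∧ volT S t ≤ mb t) ↔
    (∃ (fau : J → ℕ) (fut : J → ℕ → ℕ) (ftg ftw : ℕ → ℕ) (fgw : ℕ),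
      -- capacity constraints
      (∀ j, fau j ≤ p j) ∧
      (∀ j t, fut j t ≤ if t ∈ Ei r dl j then 1 else 0) ∧
      (∀ t ∈ Tslots dl, ftg t ≤ mb t - lb t) ∧
      (∀ t ∈ Tslots dl, ftw t ≤ lb t) ∧
      (fgw ≤ ∑ j, p j - ∑ t ∈ Tslots dl, lb t) ∧
      -- flow conservation at the nodes u_j, v_t and γ
      (∀ j, fau j = ∑ t ∈ Tslots dl, fut j t) ∧
      (∀ t ∈ Tslots dl, ∑ j, fut j t = ftg t + ftw t) ∧
      (∑ t ∈ Tslots dl, ftg t = fgw) ∧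
      -- the value of the flow (the total flow leaving α) is P
      (∑ j, fau j = ∑ j, p j)) := by
  constructor
  · rintro ⟨S, ⟨h1, h2, h3⟩, hb⟩
    -- the indicator flow
    set fut : J → ℕ → ℕ := fun j t => if ∃ k, S k t = some j then 1 else 0 with hfut
    have hcnt : ∀ t j, (Finset.univ.filter fun k : Fin m => S k t = some j).card
        = fut j t := by
      intro t j
      by_cases h : ∃ k, S k t = some j
      · obtain ⟨k0, hk0⟩ := h
        have : (Finset.univ.filter fun k : Fin m => S k t = some j) = {k0} := by
          ext k
          simp only [Finset.mem_filter, Finset.mem_univ, true_and, Finset.mem_singleton]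
          exact ⟨fun hk => h3 t j k k0 hk hk0, fun h => h ▸ hk0⟩
        rw [this, Finset.card_singleton, hfut]
        exact (if_pos ⟨k0, hk0⟩).symm
      · have : (Finset.univ.filter fun k : Fin m => S k t = some j) = ∅ := by
          rw [Finset.filter_eq_empty_iff]
          intro k _ hk; exact h ⟨k, hk⟩
        simp [this, hfut, h]
    have hA : ∀ j, ∑ t ∈ Tslots dl, fut j t = p j := by
      intro j
      rw [← h2 j, Finset.card_filter, Finset.sum_product, Finset.sum_comm]
      refine Finset.sum_congr rfl fun t _ => ?_
      rw [← hcnt t j, Finset.card_filter]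
    have hB : ∀ t, ∑ j, fut j t = volT S t := by
      intro t
      have : ∑ j, fut j t
          = (Finset.univ.filter fun j : J => ∃ k, S k t = some j).card := by
        rw [Finset.card_filter]
      rw [this]
      unfold volT
      symm
      refine Finset.card_bij (fun k hk => (S k t).get (by
        simpa using (Finset.mem_filter.mp hk).2)) ?_ ?_ ?_
      · intro k hk
        simp only [Finset.mem_filter, Finset.mem_univ, true_and]
        exact ⟨k, Option.eq_some_of_isSome _⟩
      · intro k hk k' hk' heq
        have hks : (S k t).isSome := by simpa using (Finset.mem_filter.mp hk).2
        have hks' : (S k' t).isSome := by simpa using (Finset.mem_filter.mp hk').2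
        have e1 : S k t = some ((S k t).get hks) := (Option.some_get hks).symm
        have e2 : S k' t = some ((S k t).get hks) := by
          rw [heq]; exact (Option.some_get hks').symm
        exact h3 t _ k k' e1 e2
      · intro j hj
        obtain ⟨k, hk⟩ := (Finset.mem_filter.mp hj).2
        refine ⟨k, ?_, ?_⟩
        · simp [Finset.mem_filter, hk]
        · simp [hk]
    have hC : ∑ t ∈ Tslots dl, volT S t = ∑ j, p j := by
      rw [← Finset.sum_congr rfl fun t _ => hB t, Finset.sum_comm]
      exact Finset.sum_congr rfl fun j _ => hA j
    refine ⟨p, fut, fun t => volT S t - lb t, lb,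
      ∑ t ∈ Tslots dl, (volT S t - lb t), fun j => le_refl _, ?_, ?_, fun t _ => le_refl _,
      ?_, fun j => (hA j).symm, ?_, rfl, rfl⟩
    · intro j t
      by_cases ht : t ∈ Ei r dl j
      · simp only [ht, if_true, hfut]; split <;> omega
      · simp only [ht, if_false, hfut]
        have : ¬ ∃ k, S k t = some j := fun ⟨k, hk⟩ => ht (h1 k t j hk)
        simp [this]
    · intro t ht
      exact Nat.sub_le_sub_right (hb t ht).2 (lb t)
    · have hsum : ∑ t ∈ Tslots dl, (volT S t - lb t) + ∑ t ∈ Tslots dl, lb t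
          = ∑ t ∈ Tslots dl, volT S t := by
        rw [← Finset.sum_add_distrib]
        exact Finset.sum_congr rfl fun t ht => by have := (hb t ht).1; omega
      rw [hC] at hsum
      omega
    · intro t ht
      rw [hB t]
      show volT S t = (volT S t - lb t) + lb t
      have := (hb t ht).1
      omega
  · rintro ⟨fau, fut, ftg, ftw, fgw, hcau, hcut, hctg, hctw, hcgw, hu, hv, hg, hval⟩
    have hfau : ∀ j, fau j = p j := fun j =>
      (Finset.sum_eq_sum_iff_of_le (fun j _ => hcau j)).mp hval j (Finset.mem_univ j)
    have hfut1 : ∀ j t, fut j t ≤ 1 := fun j t =>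
      le_trans (hcut j t) (by split <;> omega)
    have hEiT : ∀ j t, t ∈ Ei r dl j → t ∈ Tslots dl := by
      intro j t ht
      rw [Ei, Finset.mem_Icc] at ht
      rw [Tslots, Finset.mem_Icc]
      exact ⟨Nat.zero_le _, le_trans ht.2 (Finset.le_sup (Finset.mem_univ j))⟩
    have hfut0 : ∀ j t, t ∉ Tslots dl → fut j t = 0 := by
      intro j t ht
      have h := hcut j t
      rw [if_neg (fun hE => ht (hEiT j t hE))] at h
      omega
    have hsumT : ∑ t ∈ Tslots dl, ∑ j, fut j t = ∑ j, p j := by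
      rw [Finset.sum_comm]
      calc ∑ j, ∑ t ∈ Tslots dl, fut j t = ∑ j, fau j :=
            Finset.sum_congr rfl fun j _ => (hu j).symm
        _ = ∑ j, p j := hval
    have hsplit : ∑ t ∈ Tslots dl, ftg t + ∑ t ∈ Tslots dl, ftw t = ∑ j, p j := by
      rw [← Finset.sum_add_distrib, ← hsumT]
      exact Finset.sum_congr rfl fun t ht => (hv t ht).symm
    have htwlb : ∀ t ∈ Tslots dl, ftw t = lb t := by
      have hle : ∑ t ∈ Tslots dl, ftw t ≤ ∑ t ∈ Tslots dl, lb t :=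
        Finset.sum_le_sum hctw
      have heq : ∑ t ∈ Tslots dl, ftw t = ∑ t ∈ Tslots dl, lb t := by omega
      exact fun t ht => (Finset.sum_eq_sum_iff_of_le hctw).mp heq t ht
    set A : ℕ → Finset J := fun t => Finset.univ.filter fun j => fut j t = 1 with hA
    have hAmem : ∀ j t, j ∈ A t ↔ fut j t = 1 := by
      intro j t; rw [hA]; simp
    have hAcard : ∀ t, (A t).card = ∑ j, fut j t := by
      intro t
      rw [hA, Finset.card_filter]
      refine Finset.sum_congr rfl fun j _ => ?_
      have := hfut1 j t
      by_cases h : fut j t = 1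
      · simp [h]
      · simp only [h, if_false]; omega
    have hAm : ∀ t, (A t).card ≤ m := by
      intro t
      by_cases ht : t ∈ Tslots dl
      · rw [hAcard, hv t ht]
        have h1 := hctg t ht
        have h2 := hlm t ht
        have h3 := hmb t ht
        have h4 := htwlb t ht
        omega
      · rw [hAcard, Finset.sum_eq_zero (fun j _ => hfut0 j t ht)]
        exact Nat.zero_le m
    set S : Fin m → ℕ → Option J := fun k t => (A t).toList[(k : ℕ)]? with hS
    have hSmem : ∀ (k : Fin m) (t : ℕ) (j : J), S k t = some j → j ∈ A t := by
      intro k t j hk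
      rw [hS] at hk
      exact Finset.mem_toList.mp (List.mem_iff_getElem?.mpr ⟨k, hk⟩)
    have hfutind : ∀ j t, fut j t = if j ∈ A t then 1 else 0 := by
      intro j t
      have := hfut1 j t
      by_cases h : j ∈ A t
      · rw [if_pos h]; exact (hAmem j t).mp h
      · rw [if_neg h]
        have : ¬ fut j t = 1 := fun h1 => h ((hAmem j t).mpr h1)
        omega
    refine ⟨S, ⟨?_, ?_, ?_⟩, ?_⟩
    · -- condition 1
      intro k t j hk
      have hj : fut j t = 1 := (hAmem j t).mp (hSmem k t j hk)
      have h := hcut j t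
      by_cases hE : t ∈ Ei r dl j
      · exact hE
      · rw [if_neg hE] at h; omega
    · -- condition 2
      intro j
      rw [Finset.card_filter, Finset.sum_product, Finset.sum_comm]
      have : ∀ t ∈ Tslots dl,
          (∑ k : Fin m, if S k t = some j then 1 else 0) = fut j t := by
        intro t _
        rw [← Finset.card_filter]
        rw [hS]
        rw [keyCount m (A t) (hAm t) j]
        exact (hfutind j t).symm
      rw [Finset.sum_congr rfl this, ← hu j, hfau j]
    · -- condition 3
      intro t j k k' hk hk'
      rw [hS] at hk hk'
      have hklen : (k : ℕ) < (A t).toList.length := by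
        rcases List.getElem?_eq_some_iff.mp hk with ⟨h, _⟩; exact h
      exact Fin.ext ((List.getElem?_inj hklen (Finset.nodup_toList _)).mp (hk.trans hk'.symm))
    · -- bounds
      intro t ht
      have hvol : volT S t = (A t).card := by
        unfold volT
        have hfc : Finset.univ.filter (fun k : Fin m => (S k t).isSome)
            = Finset.univ.filter (fun k : Fin m => (k : ℕ) < (A t).card) := by
          refine Finset.filter_congr fun k _ => ?_
          rw [hS]
          show ((A t).toList[(k : ℕ)]?).isSome = true ↔ (k : ℕ) < (A t).card
          rw [Option.isSome_iff_exists, ← Finset.length_toList]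
          constructor
          · rintro ⟨a, ha⟩
            rcases List.getElem?_eq_some_iff.mp ha with ⟨h, _⟩
            exact h
          · intro h
            exact ⟨(A t).toList[(k : ℕ)], List.getElem?_eq_getElem h⟩
        rw [hfc, cardFinLt m _ (hAm t)]
      rw [hvol, hAcard, hv t ht, htwlb t ht]
      have h1 := hctg t ht
      have h2 := hlm t ht
      omega
end

section
/- For every α-ω cut S of the associated flow network, setting Q(S) := {t ∈ T : v_t ∈ S} and Q(S̄) := {t ∈ T : v_t ∉ S}, at least one of the following two lower bounds on the capacity holds: c(S) ≥ P − def(Q(S)), or c(S) ≥ P − exc(Q(S̄)). -/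
open Finset

/-- Deficiency of `Q`: forced volume minus available processing capacity. -/
def defQ {J : Type} [Fintype J] (r dl p : J → ℕ) (mb : ℕ → ℕ) (Q : Finset ℕ) : ℤ :=
  (fvQ r dl p Q : ℤ) - ∑ t ∈ Q, (mb t : ℤ)

/-- Excess of `Q`: required processor utilization minus available work. -/
def excQ {J : Type} [Fintype J] (r dl p : J → ℕ) (lb : ℕ → ℕ) (Q : Finset ℕ) : ℤ :=
  (∑ t ∈ Q, (lb t : ℤ)) - (pvQ r dl p Q : ℤ)

/-- The nodes of the flow network associated with an instance of
deadline-scheduling-with-processor-bounds. -/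
inductive Node (J : Type) where
  | alpha : Node J
  | omega : Node J
  | gamma : Node J
  | job : J → Node J
  | slot : ℕ → Node J

/-- The capacity of a cut `S` (given by its indicator function on the nodes): the sum of
the capacities of all edges of the network leaving `S`. -/
def cutCap {J : Type} [Fintype J] (r dl p : J → ℕ) (lb mb : ℕ → ℕ)
    (S : Node J → Bool) : ℕ :=
  (∑ j, if S Node.alpha = true ∧ S (Node.job j) = false then p j else 0) +
  (∑ j, ∑ t ∈ Tslots dl,
    if S (Node.job j) = true ∧ S (Node.slot t) = false ∧ t ∈ Ei r dl j then 1 else 0) +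
  (∑ t ∈ Tslots dl,
    if S (Node.slot t) = true ∧ S Node.gamma = false then mb t - lb t else 0) +
  (∑ t ∈ Tslots dl,
    if S (Node.slot t) = true ∧ S Node.omega = false then lb t else 0) +
  (if S Node.gamma = true ∧ S Node.omega = false then
    ∑ j, p j - ∑ t ∈ Tslots dl, lb t else 0)

/-! With `Q` the slots in `S` and `Q̄` their complement in `T`, we have `p j - fv(j, Q) = pv(j, Q̄)`,
and the edges `(α, u_j)`, `(u_j, v_t)` leaving `S` have capacity at least `pv(Q̄)`: job `j`
contributes `p j` if `u_j ∉ S` and `|E j ∩ Q̄|` otherwise. The remaining edges leaving `S`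
contribute `∑_{t ∈ Q} m_t` if `γ ∉ S`, which gives the first bound, and
`∑_{t ∈ Q} l_t + P - ∑_{t ∈ T} l_t = P - ∑_{t ∈ Q̄} l_t` if `γ ∈ S`, which gives the second. -/

section CutCapacity

variable {J : Type} (r dl p : J → ℕ)

theorem fvJ_add_pvJ_sdiff {U : Finset ℕ} {j : J} (hU : Ei r dl j ⊆ U) (Q : Finset ℕ) :
    fvJ r dl p j Q + pvJ r dl p j (U \ Q) = p j := by
  have hinter : Ei r dl j ∩ (U \ Q) = Ei r dl j \ Q := by
    rw [← Finset.inter_sdiff_assoc, Finset.inter_eq_left.mpr hU]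
  rw [fvJ, pvJ, hinter]
  omega

variable [Fintype J]

theorem Ei_subset_Tslots (j : J) : Ei r dl j ⊆ Tslots dl := by
  intro t ht
  simp only [Ei, Tslots, Finset.mem_Icc] at ht ⊢
  exact ⟨Nat.zero_le _, ht.2.trans (Finset.le_sup (Finset.mem_univ j))⟩

theorem fvQ_add_pvQ_sdiff {U : Finset ℕ} (hU : ∀ j, Ei r dl j ⊆ U) (Q : Finset ℕ) :
    fvQ r dl p Q + pvQ r dl p (U \ Q) = ∑ j, p j := by
  rw [fvQ, pvQ, ← Finset.sum_add_distrib]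
  exact Finset.sum_congr rfl fun j _ => fvJ_add_pvJ_sdiff r dl p (hU j) Q

/-- The capacity of the edges `(α, u_j)` and `(u_j, v_t)` leaving a cut that contains `α`. -/
def jobCutCap (S : Node J → Bool) : ℕ :=
  (∑ j, if S (Node.job j) = false then p j else 0) +
  (∑ j, ∑ t ∈ Tslots dl,
    if S (Node.job j) = true ∧ S (Node.slot t) = false ∧ t ∈ Ei r dl j then 1 else 0)

theorem pvQ_le_jobCutCap (S : Node J → Bool) :
    pvQ r dl p ((Tslots dl).filter fun t => S (Node.slot t) = false) ≤ jobCutCap r dl p S := by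
  rw [pvQ, jobCutCap, ← Finset.sum_add_distrib]
  refine Finset.sum_le_sum fun j _ => ?_
  cases hj : S (Node.job j)
  · simp only [if_true, Bool.false_eq_true, false_and, if_false, Finset.sum_const_zero,
      add_zero]
    exact min_le_left _ _
  · have hslots : (∑ t ∈ Tslots dl,
        if S (Node.slot t) = false ∧ t ∈ Ei r dl j then 1 else 0) =
        (Ei r dl j ∩ (Tslots dl).filter fun t => S (Node.slot t) = false).card := by
      rw [Finset.sum_boole, Nat.cast_id, Finset.inter_comm, ← Finset.filter_mem_eq_inter,
        Finset.filter_filter]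
    simp only [Bool.true_eq_false, if_false, true_and, zero_add, hslots]
    exact min_le_right _ _

variable (lb mb : ℕ → ℕ)

theorem cutCap_eq_of_gamma_false (S : Node J → Bool) (hlm : ∀ t ∈ Tslots dl, lb t ≤ mb t)
    (hα : S Node.alpha = true) (hω : S Node.omega = false) (hγ : S Node.gamma = false) :
    cutCap r dl p lb mb S =
      jobCutCap r dl p S + ∑ t ∈ (Tslots dl).filter (fun t => S (Node.slot t) = true), mb t := by
  have hslots : (∑ t ∈ Tslots dl, if S (Node.slot t) = true then mb t - lb t else 0) +
      (∑ t ∈ Tslots dl, if S (Node.slot t) = true then lb t else 0) =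
      ∑ t ∈ (Tslots dl).filter (fun t => S (Node.slot t) = true), mb t := by
    rw [← Finset.sum_add_distrib, Finset.sum_filter]
    refine Finset.sum_congr rfl fun t ht => ?_
    have := hlm t ht
    split_ifs <;> omega
  simp only [cutCap, jobCutCap, hα, hω, hγ, true_and, and_true, Bool.false_eq_true,
    if_false, add_zero]
  omega

theorem cutCap_eq_of_gamma_true (S : Node J → Bool) (hlP : ∑ t ∈ Tslots dl, lb t ≤ ∑ j, p j)
    (hα : S Node.alpha = true) (hω : S Node.omega = false) (hγ : S Node.gamma = true) :
    (cutCap r dl p lb mb S : ℤ) = jobCutCap r dl p S + ∑ j, (p j : ℤ) -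
      ∑ t ∈ (Tslots dl).filter (fun t => S (Node.slot t) = false), (lb t : ℤ) := by
  have hsplit := Finset.sum_filter_add_sum_filter_not (Tslots dl)
    (fun t => S (Node.slot t) = true) fun t => (lb t : ℤ)
  simp only [Bool.not_eq_true] at hsplit
  simp only [cutCap, jobCutCap, hα, hω, hγ, true_and, and_true, Bool.true_eq_false, and_false,
    if_false, if_true, Finset.sum_const_zero, add_zero, ← Finset.sum_filter]
  push_cast [hlP]
  omega

end CutCapacity

theorem cut_lower_bound_general (J : Type) [Fintype J]
    (r dl p : J → ℕ)
    (lb mb : ℕ → ℕ)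
    (hlm : ∀ t ∈ Tslots dl, lb t ≤ mb t)
    (hlP : ∑ t ∈ Tslots dl, lb t ≤ ∑ j, p j)
    (S : Node J → Bool) (hα : S Node.alpha = true) (hω : S Node.omega = false) :
    ((∑ j, p j : ℕ) : ℤ) -
        defQ r dl p mb ((Tslots dl).filter (fun t => S (Node.slot t) = true)) ≤
      (cutCap r dl p lb mb S : ℤ) ∨
    ((∑ j, p j : ℕ) : ℤ) -
        excQ r dl p lb ((Tslots dl).filter (fun t => S (Node.slot t) = false)) ≤
      (cutCap r dl p lb mb S : ℤ) := by
  have hQc : (Tslots dl).filter (fun t => S (Node.slot t) = false) =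
      Tslots dl \ (Tslots dl).filter (fun t => S (Node.slot t) = true) := by
    simp only [← Finset.filter_not, Bool.not_eq_true]
  have hjob := pvQ_le_jobCutCap r dl p S
  have hvol := fvQ_add_pvQ_sdiff r dl p (Ei_subset_Tslots r dl)
    ((Tslots dl).filter fun t => S (Node.slot t) = true)
  rw [← hQc] at hvol
  zify at hjob hvol
  cases hγ : S Node.gamma
  · left
    rw [defQ, cutCap_eq_of_gamma_false r dl p lb mb S hlm hα hω hγ]
    push_cast
    omega
  · right
    rw [excQ, cutCap_eq_of_gamma_true r dl p lb mb S hlP hα hω hγ]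
    push_cast
    omega

/-- For every `α`-`ω` cut `S` of the associated flow network, with
`Q(S) = {t ∈ T : v_t ∈ S}` and `Q(S̄) = {t ∈ T : v_t ∉ S}`, at least one of the lower
bounds `c(S) ≥ P − def(Q(S))` and `c(S) ≥ P − exc(Q(S̄))` holds. -/
theorem cut_lower_bound (J : Type) [Fintype J] [DecidableEq J]
    (r dl p : J → ℕ) (hrd : ∀ j, r j ≤ dl j) (hp : ∀ j, p j ≤ dl j - r j + 1)
    (m : ℕ) (hm : 1 ≤ m)
    (lb mb : ℕ → ℕ)
    (hlm : ∀ t ∈ Tslots dl, lb t ≤ mb t) (hmb : ∀ t ∈ Tslots dl, mb t ≤ m)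
    (hlP : ∑ t ∈ Tslots dl, lb t ≤ ∑ j, p j)
    (S : Node J → Bool) (hα : S Node.alpha = true) (hω : S Node.omega = false) :
    ((∑ j, p j : ℕ) : ℤ) -
        defQ r dl p mb ((Tslots dl).filter (fun t => S (Node.slot t) = true)) ≤
      (cutCap r dl p lb mb S : ℤ) ∨
    ((∑ j, p j : ℕ) : ℤ) -
        excQ r dl p lb ((Tslots dl).filter (fun t => S (Node.slot t) = false)) ≤
      (cutCap r dl p lb mb S : ℤ) :=
  cut_lower_bound_general J r dl p lb mb hlm hlP S hα hω
end

section
/- An instance of deadline-scheduling-with-processor-bounds admits a feasible solution if and only if def(Q) ≤ 0 and exc(Q) ≤ 0 for every subset Q ⊆ T. -/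
open Finset

namespace SchedAux

set_option linter.unusedSectionVars false

variable {J : Type} [Fintype J] [DecidableEq J]

/-- number of jobs using slot t -/
def degA (A : J → Finset ℕ) (t : ℕ) : ℕ := (Finset.univ.filter (fun j => t ∈ A j)).card

theorem degA_eq_sum (A : J → Finset ℕ) (t : ℕ) :
    degA A t = ∑ j, if t ∈ A j then 1 else 0 := by
  classical
  rw [degA, Finset.card_filter]

theorem sum_degA (A : J → Finset ℕ) (Q : Finset ℕ) :
    ∑ t ∈ Q, degA A t = ∑ j, ((A j) ∩ Q).card := by
  classical
  simp only [degA_eq_sum]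
  rw [Finset.sum_comm]
  congr 1
  ext j
  rw [Finset.card_eq_sum_ones ((A j) ∩ Q), ← Finset.sum_filter]
  congr 1
  ext t; simp [Finset.mem_inter, and_comm]

theorem degA_update (A : J → Finset ℕ) (j : J) (s : Finset ℕ) (t : ℕ) :
    degA (Function.update A j s) t + (if t ∈ A j then 1 else 0)
      = degA A t + (if t ∈ s then 1 else 0) := by
  classical
  simp only [degA_eq_sum]
  rw [← Finset.add_sum_erase Finset.univ _ (Finset.mem_univ j),
      ← Finset.add_sum_erase Finset.univ (fun j' => if t ∈ A j' then (1:ℕ) else 0) (Finset.mem_univ j)]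
  have h2 : ∑ j' ∈ Finset.univ.erase j, (if t ∈ Function.update A j s j' then (1:ℕ) else 0)
      = ∑ j' ∈ Finset.univ.erase j, (if t ∈ A j' then (1:ℕ) else 0) := by
    apply Finset.sum_congr rfl
    intro j' hj'
    rw [Function.update_of_ne (Finset.mem_erase.1 hj').1]
  rw [h2, Function.update_self]
  ring



theorem chain_drop_prefix {α : Type*} {r : α → α → Prop} {a : α} :
    ∀ (l₁ : List α) (l₂ : List α) (h : α), List.Chain r h (l₁ ++ a :: l₂) → List.Chain r a l₂ := by
  intro l₁
  induction l₁ with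
  | nil => intro l₂ h hc; rw [List.nil_append, List.Chain, List.chain_cons] at hc; exact hc.2
  | cons x xs ih =>
      intro l₂ h hc
      rw [List.cons_append, List.Chain, List.chain_cons] at hc
      exact ih l₂ x hc.2

theorem chain_imp_mem {α : Type*} {r r' : α → α → Prop} :
    ∀ (l : List α) (a : α), (∀ u v, (u = a ∨ u ∈ l) → v ∈ l → r u v → r' u v) →
      List.Chain r a l → List.Chain r' a l := by
  intro l
  induction l with
  | nil => intro a _ _; exact List.Chain.nil
  | cons c rest ih =>
      intro a himp hc
      rw [List.Chain, List.chain_cons] at hc ⊢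
      constructor
      · exact himp a c (Or.inl rfl) (List.mem_cons_self) hc.1
      · exact ih c (fun u v hu hv hr => himp u v (Or.inr (by cases hu with
          | inl h => exact h ▸ List.mem_cons_self
          | inr h => exact List.mem_cons_of_mem _ h)) (List.mem_cons_of_mem _ hv) hr) hc.2

/-- From any chain-walk from `a` to `b` with `a ≠ b` we can extract one with no duplicate
vertices. -/
theorem dedup_chain {α : Type*} [DecidableEq α] {r : α → α → Prop} :
    ∀ (n : ℕ) (l : List α) (a b : α), l.length ≤ n → a ≠ b →
      List.Chain r a (l ++ [b]) →
      ∃ l' : List α, List.Chain r a (l' ++ [b]) ∧ (a :: (l' ++ [b])).Nodup ∧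
        ∀ x ∈ l', x ∈ l := by
  intro n
  induction n with
  | zero =>
      intro l a b hlen hab hc
      have : l = [] := List.length_eq_zero_iff.1 (Nat.le_zero.1 hlen)
      subst this
      exact ⟨[], hc, by simp [hab], by simp⟩
  | succ n ih =>
      intro l a b hlen hab hc
      by_cases hal : a ∈ l
      · -- cut the walk at the second visit of a
        obtain ⟨l₁, l₂, rfl⟩ := List.append_of_mem hal
        have hc2 : List.Chain r a (l₂ ++ [b]) := by
          have := hc
          rw [List.append_assoc, List.cons_append] at this
          exact chain_drop_prefix l₁ (l₂ ++ [b]) a this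
        have hlen2 : l₂.length ≤ n := by
          have := hlen
          simp [List.length_append] at this
          omega
        obtain ⟨l', h1, h2, h3⟩ := ih l₂ a b hlen2 hab hc2
        exact ⟨l', h1, h2, fun x hx => by simp [h3 x hx]⟩
      · cases l with
        | nil => exact ⟨[], hc, by simp [hab], by simp⟩
        | cons c rest =>
            rw [List.cons_append, List.Chain, List.chain_cons] at hc
            by_cases hcb : c = b
            · subst hcb
              exact ⟨[], by simpa using List.Chain.cons hc.1 List.Chain.nil, by simp [hab], by simp⟩
            · have hlr : rest.length ≤ n := by
                have := hlen; simp at this; omega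
              obtain ⟨l', h1, h2, h3⟩ := ih rest c b hlr hcb hc.2
              refine ⟨c :: l', ?_, ?_, ?_⟩
              · rw [List.cons_append, List.Chain, List.chain_cons]; exact ⟨hc.1, h1⟩
              · rw [List.nodup_cons]
                refine ⟨?_, h2⟩
                simp only [List.cons_append, List.mem_cons, List.mem_append, List.mem_singleton]
                push_neg
                refine ⟨fun h => hal (h ▸ List.mem_cons_self), ?_, hab, List.not_mem_nil⟩
                intro hx
                exact hal (List.mem_cons_of_mem _ (h3 a hx))
              · intro x hx
                rcases List.mem_cons.1 hx with h | h
                · exact h ▸ List.mem_cons_self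
                · exact List.mem_cons_of_mem _ (h3 x h)

/-- moving one unit of job `j` from slot `c` to slot `a`. -/
theorem single_move (E A : J → Finset ℕ) (hsub : ∀ j', A j' ⊆ E j') (j : J) (a c : ℕ)
    (haE : a ∈ E j) (haA : a ∉ A j) (hcA : c ∈ A j) (hac : a ≠ c) :
    (∀ j', Function.update A j (insert a ((A j).erase c)) j' ⊆ E j') ∧
    (∀ j', (Function.update A j (insert a ((A j).erase c)) j').card = (A j').card) ∧
    (∀ t, t ≠ a → t ≠ c → degA (Function.update A j (insert a ((A j).erase c))) t = degA A t) ∧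
    degA (Function.update A j (insert a ((A j).erase c))) a = degA A a + 1 ∧
    degA A c = degA (Function.update A j (insert a ((A j).erase c))) c + 1 ∧
    (∀ j' t', t' ∈ Function.update A j (insert a ((A j).erase c)) j' →
      t' ∈ A j' ∨ (j' = j ∧ t' = a)) ∧
    (∀ j' t', t' ∈ A j' → t' ≠ c → t' ∈ Function.update A j (insert a ((A j).erase c)) j') := by
  set s := insert a ((A j).erase c) with hs
  have hmem : ∀ t, t ∈ s ↔ (t = a ∨ (t ∈ A j ∧ t ≠ c)) := by
    intro t; simp [hs, Finset.mem_insert, Finset.mem_erase, and_comm]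
  refine ⟨?_, ?_, ?_, ?_, ?_, ?_, ?_⟩
  · intro j'
    by_cases h : j' = j
    · subst h; rw [Function.update_self]
      intro t ht
      rcases (hmem t).1 ht with h | h
      · exact h ▸ haE
      · exact hsub j' h.1
    · rw [Function.update_of_ne h]; exact hsub j'
  · intro j'
    by_cases h : j' = j
    · subst h; rw [Function.update_self]
      have : a ∉ (A j').erase c := fun h => haA (Finset.mem_of_mem_erase h)
      rw [Finset.card_insert_of_notMem this, Finset.card_erase_of_mem hcA]
      have : 1 ≤ (A j').card := Finset.card_pos.2 ⟨c, hcA⟩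
      omega
    · rw [Function.update_of_ne h]
  · intro t hta htc
    have := degA_update A j s t
    have h1 : (t ∈ s) ↔ (t ∈ A j) := by
      rw [hmem]
      constructor
      · rintro (h | h)
        · exact absurd h hta
        · exact h.1
      · intro h; exact Or.inr ⟨h, htc⟩
    by_cases h : t ∈ A j
    · simp [h, h1.2 h] at this; omega
    · have h2 : t ∉ s := fun hh => h (h1.1 hh)
      simp [h, h2] at this; omega
  · have := degA_update A j s a
    have h1 : a ∈ s := (hmem a).2 (Or.inl rfl)
    simp [haA, h1] at this; omega
  · have := degA_update A j s c
    have h1 : c ∉ s := by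
      rw [hmem]
      rintro (h | h)
      · exact hac h.symm
      · exact h.2 rfl
    simp [hcA, h1] at this; omega
  · intro j' t' ht'
    by_cases h : j' = j
    · subst h; rw [Function.update_self] at ht'
      rcases (hmem t').1 ht' with h | h
      · exact Or.inr ⟨rfl, h⟩
      · exact Or.inl h.1
    · rw [Function.update_of_ne h] at ht'; exact Or.inl ht'
  · intro j' t' ht' htc
    by_cases h : j' = j
    · subst h; rw [Function.update_self]
      exact (hmem t').2 (Or.inr ⟨ht', htc⟩)
    · rw [Function.update_of_ne h]; exact ht'


def R1 (E A : J → Finset ℕ) (t t' : ℕ) : Prop := ∃ j, t ∈ A j ∧ t' ∈ E j ∧ t' ∉ A j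
def R2 (E A : J → Finset ℕ) (t t' : ℕ) : Prop := ∃ j, t ∈ E j ∧ t ∉ A j ∧ t' ∈ A j

/-- Pulling one unit along an `R2`-path to its start: degree increases at `a`,
decreases at `b`. -/
theorem move2 (E : J → Finset ℕ) :
    ∀ (l : List ℕ) (A : J → Finset ℕ) (a b : ℕ),
      (∀ j, A j ⊆ E j) → List.Chain (R2 E A) a (l ++ [b]) → (a :: (l ++ [b])).Nodup →
      ∃ A', (∀ j, A' j ⊆ E j) ∧ (∀ j, (A' j).card = (A j).card) ∧
        (∀ t, t ≠ a → t ≠ b → degA A' t = degA A t) ∧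
        degA A' a = degA A a + 1 ∧ degA A b = degA A' b + 1 := by
  intro l
  induction l with
  | nil =>
      intro A a b hsub hc hnd
      rw [List.nil_append, List.Chain, List.chain_cons] at hc
      obtain ⟨j, haE, haA, hbA⟩ := hc.1
      have hab : a ≠ b := by simp at hnd; tauto
      obtain ⟨h1, h2, h3, h4, h5, -, -⟩ := single_move E A hsub j a b haE haA hbA hab
      exact ⟨_, h1, h2, h3, h4, h5⟩
  | cons c l' ih =>
      intro A a b hsub hc hnd
      rw [List.cons_append, List.Chain, List.chain_cons] at hc
      obtain ⟨j, haE, haA, hcA⟩ := hc.1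
      rw [List.cons_append, List.nodup_cons] at hnd
      have hatail : a ∉ c :: (l' ++ [b]) := hnd.1
      have hnd1 : (c :: (l' ++ [b])).Nodup := hnd.2
      have hac : a ≠ c := fun h => hatail (h ▸ List.mem_cons_self)
      have hanotin : a ∉ l' ++ [b] := fun h => hatail (List.mem_cons_of_mem _ h)
      have hcnotin : c ∉ l' ++ [b] := (List.nodup_cons.1 hnd1).1
      have hab : a ≠ b := fun h => hanotin (h ▸ List.mem_append_right _ (List.mem_singleton_self _))
      obtain ⟨h1, h2, h3, h4, h5, hmem1, hmem2⟩ := single_move E A hsub j a c haE haA hcA hac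
      set A₁ := Function.update A j (insert a ((A j).erase c)) with hA1
      have hchain1 : List.Chain (R2 E A₁) c (l' ++ [b]) := by
        apply chain_imp_mem _ _ _ hc.2
        intro u v hu hv hr
        obtain ⟨j₂, huE, huA, hvA⟩ := hr
        refine ⟨j₂, huE, ?_, ?_⟩
        · intro hcon
          rcases hmem1 j₂ u hcon with h | h
          · exact huA h
          · rcases hu with h' | h'
            · exact hac (h.2.symm.trans h')
            · exact hanotin (h.2 ▸ h')
        · exact hmem2 j₂ v hvA (fun h => hcnotin (h ▸ hv))
      obtain ⟨A', g1, g2, g3, g4, g5⟩ := ih A₁ c b h1 hchain1 hnd1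
      have hbc : b ≠ c := fun h => hcnotin (h ▸ List.mem_append_right _ (List.mem_singleton_self _))
      refine ⟨A', g1, fun j' => (g2 j').trans (h2 j'), ?_, ?_, ?_⟩
      · intro t hta htb
        by_cases htc : t = c
        · subst htc
          have e1 : degA A' t = degA A₁ t + 1 := g4
          have e2 : degA A t = degA A₁ t + 1 := h5
          omega
        · rw [g3 t htc htb, h3 t hta htc]
      · rw [g3 a hac hab, h4]
      · have e1 : degA A₁ b = degA A b := h3 b hab.symm hbc
        have e2 : degA A₁ b = degA A' b + 1 := g5
        omega

/-- Pushing one unit along an `R1`-path away from its start: degree decreases at `a`,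
increases at `b`; moreover no slot outside the path gains a unit. -/
theorem move1 (E : J → Finset ℕ) :
    ∀ (l : List ℕ) (A : J → Finset ℕ) (a b : ℕ),
      (∀ j, A j ⊆ E j) → List.Chain (R1 E A) a (l ++ [b]) → (a :: (l ++ [b])).Nodup →
      ∃ A', (∀ j, A' j ⊆ E j) ∧ (∀ j, (A' j).card = (A j).card) ∧
        (∀ t, t ≠ a → t ≠ b → degA A' t = degA A t) ∧
        degA A a = degA A' a + 1 ∧ degA A' b = degA A b + 1 ∧
        (∀ j t', t' ∈ A' j → t' ∈ A j ∨ t' ∈ l ++ [b]) := by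
  intro l
  induction l with
  | nil =>
      intro A a b hsub hc hnd
      rw [List.nil_append, List.Chain, List.chain_cons] at hc
      obtain ⟨j, haA, hbE, hbA⟩ := hc.1
      have hab : a ≠ b := by simp at hnd; tauto
      obtain ⟨h1, h2, h3, h4, h5, hmem1, -⟩ :=
        single_move E A hsub j b a hbE hbA haA (Ne.symm hab)
      refine ⟨_, h1, h2, fun t hta htb => h3 t htb hta, h5, h4, ?_⟩
      intro j' t' ht'
      rcases hmem1 j' t' ht' with h | h
      · exact Or.inl h
      · exact Or.inr (h.2 ▸ List.mem_singleton_self _)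
  | cons c l' ih =>
      intro A a b hsub hc hnd
      rw [List.cons_append, List.Chain, List.chain_cons] at hc
      obtain ⟨j, haA, hcE, hcA⟩ := hc.1
      rw [List.cons_append, List.nodup_cons] at hnd
      have hatail : a ∉ c :: (l' ++ [b]) := hnd.1
      have hnd1 : (c :: (l' ++ [b])).Nodup := hnd.2
      have hac : a ≠ c := fun h => hatail (h ▸ List.mem_cons_self)
      have hanotin : a ∉ l' ++ [b] := fun h => hatail (List.mem_cons_of_mem _ h)
      have hcnotin : c ∉ l' ++ [b] := (List.nodup_cons.1 hnd1).1
      have hab : a ≠ b := fun h => hanotin (h ▸ List.mem_append_right _ (List.mem_singleton_self _))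
      have hbc : b ≠ c := fun h => hcnotin (h ▸ List.mem_append_right _ (List.mem_singleton_self _))
      obtain ⟨h1, h2, h3, h4, h5, hmem1, hmem2⟩ :=
        single_move E A hsub j c a hcE hcA haA (Ne.symm hac)
      set A₁ := Function.update A j (insert c ((A j).erase a)) with hA1
      have hchain1 : List.Chain (R1 E A₁) c (l' ++ [b]) := by
        apply chain_imp_mem _ _ _ hc.2
        intro u v hu hv hr
        obtain ⟨j₂, huA, hvE, hvA⟩ := hr
        refine ⟨j₂, ?_, hvE, ?_⟩
        · apply hmem2 j₂ u huA
          intro h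
          rcases hu with h' | h'
          · exact hac (h.symm.trans h')
          · exact hanotin (h ▸ h')
        · intro hcon
          rcases hmem1 j₂ v hcon with h | h
          · exact hvA h
          · exact hcnotin (h.2 ▸ hv)
      obtain ⟨A', g1, g2, g3, g4, g5, gmem⟩ := ih A₁ c b h1 hchain1 hnd1
      refine ⟨A', g1, fun j' => (g2 j').trans (h2 j'), ?_, ?_, ?_, ?_⟩
      · intro t hta htb
        by_cases htc : t = c
        · subst htc
          have e1 : degA A₁ t = degA A' t + 1 := g4
          have e2 : degA A₁ t = degA A t + 1 := h4
          omega
        · rw [g3 t htc htb, h3 t htc hta]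
      · rw [g3 a hac hab]; exact h5
      · rw [g5, h3 b hbc hab.symm]
      · intro j' t' ht'
        rcases gmem j' t' ht' with h | h
        · rcases hmem1 j' t' h with h' | h'
          · exact Or.inl h'
          · exact Or.inr (by simp [h'.2])
        · exact Or.inr (by simp only [List.cons_append, List.mem_cons]; right; exact h)


theorem exists_nodup_path {r : ℕ → ℕ → Prop} {a b : ℕ} (h : Relation.ReflTransGen r a b)
    (hne : a ≠ b) : ∃ l : List ℕ, List.Chain r a (l ++ [b]) ∧ (a :: (l ++ [b])).Nodup := by
  classical
  obtain ⟨l₀, hch, hlast⟩ := List.exists_isChain_cons_of_relationReflTransGen h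
  have hl₀ : l₀ ≠ [] := by
    rintro rfl
    simp at hlast
    exact hne hlast
  have hsplit : l₀.dropLast ++ [l₀.getLast hl₀] = l₀ := List.dropLast_append_getLast hl₀
  have hlast' : l₀.getLast hl₀ = b := by
    rw [List.getLast_cons hl₀] at hlast; exact hlast
  subst hlast'
  rw [← hsplit] at hch
  obtain ⟨l', h1, h2, -⟩ := dedup_chain (l₀.dropLast.length) l₀.dropLast a (l₀.getLast hl₀)
    le_rfl hne hch
  exact ⟨l', h1, h2⟩


theorem phase1 (T : Finset ℕ) (E : J → Finset ℕ) (p : J → ℕ) (mb : ℕ → ℕ)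
    (hET : ∀ j, E j ⊆ T)
    (HDu : ∀ Q ⊆ T, ∑ j, (p j - ((E j) \ Q).card) ≤ ∑ t ∈ Q, mb t) :
    ∀ (n : ℕ) (A : J → Finset ℕ), (∀ j, A j ⊆ E j) → (∀ j, (A j).card ≤ p j) →
      (∀ t ∈ T, degA A t ≤ mb t) → (∑ j, (p j - (A j).card)) ≤ n →
      ∃ A', (∀ j, A' j ⊆ E j) ∧ (∀ j, (A' j).card = p j) ∧ (∀ t ∈ T, degA A' t ≤ mb t) := by
  classical
  intro n
  induction n with
  | zero =>
      intro A hsub hcard hdeg hm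
      refine ⟨A, hsub, fun j => le_antisymm (hcard j) ?_, hdeg⟩
      have := Finset.sum_eq_zero_iff.1 (Nat.le_zero.1 hm) j (Finset.mem_univ j)
      omega
  | succ n ih =>
      intro A hsub hcard hdeg hm
      by_cases hall : ∀ j, p j ≤ (A j).card
      · exact ⟨A, hsub, fun j => le_antisymm (hcard j) (hall j), hdeg⟩
      push_neg at hall
      obtain ⟨j0, hj0⟩ := hall
      set Q : Finset ℕ :=
        T.filter (fun t => ∃ t1, t1 ∈ E j0 ∧ t1 ∉ A j0 ∧ Relation.ReflTransGen (R1 E A) t1 t)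
        with hQ
      have hseed : ∀ t1, t1 ∈ E j0 → t1 ∉ A j0 → t1 ∈ Q := by
        intro t1 h1 h2
        exact Finset.mem_filter.2 ⟨hET j0 h1, t1, h1, h2, Relation.ReflTransGen.refl⟩
      have hclosed : ∀ t ∈ Q, ∀ j, t ∈ A j → ∀ t', t' ∈ E j → t' ∉ A j → t' ∈ Q := by
        intro t ht j htj t' h1 h2
        obtain ⟨htT, t1, hs1, hs2, hpath⟩ := Finset.mem_filter.1 ht
        exact Finset.mem_filter.2 ⟨hET j h1, t1, hs1, hs2, hpath.tail ⟨j, htj, h1, h2⟩⟩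
      by_cases hfree : ∃ u ∈ Q, degA A u < mb u
      · -- augment
        obtain ⟨u, huQ, hulb⟩ := hfree
        obtain ⟨-, t1, ht1E, ht1A, hpath⟩ := Finset.mem_filter.1 huQ
        -- get A' with degA A t1 = degA A' t1 + 1 and degA A' u = degA A u + 1, or A if t1 = u
        have key : ∃ A', (∀ j, A' j ⊆ E j) ∧ (∀ j, (A' j).card = (A j).card) ∧
            (∀ t, t ≠ t1 → t ≠ u → degA A' t = degA A t) ∧ t1 ∉ A' j0 ∧
            ((t1 = u ∧ A' = A) ∨
              (degA A t1 = degA A' t1 + 1 ∧ degA A' u = degA A u + 1)) := by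
          by_cases hte : t1 = u
          · exact ⟨A, hsub, fun _ => rfl, fun _ _ _ => rfl, ht1A, Or.inl ⟨hte, rfl⟩⟩
          · obtain ⟨l, hch, hnd⟩ := exists_nodup_path hpath hte
            obtain ⟨A', g1, g2, g3, g4, g5, gmem⟩ := move1 E l A t1 u hsub hch hnd
            refine ⟨A', g1, g2, g3, ?_, Or.inr ⟨g4, g5⟩⟩
            intro hcon
            rcases gmem j0 t1 hcon with h | h
            · exact ht1A h
            · exact (List.nodup_cons.1 hnd).1 h
        obtain ⟨A', g1, g2, g3, gt1, gcase⟩ := key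
        set A'' := Function.update A' j0 (insert t1 (A' j0)) with hA''
        have hcard'' : ∀ j, (A'' j).card = if j = j0 then (A j).card + 1 else (A j).card := by
          intro j
          by_cases h : j = j0
          · subst h; rw [hA'', Function.update_self, Finset.card_insert_of_notMem gt1, g2]
            simp
          · rw [hA'', Function.update_of_ne h, g2]; simp [h]
        have hdegt1 : degA A'' t1 = degA A' t1 + 1 := by
          have h := degA_update A' j0 (insert t1 (A' j0)) t1
          rw [← hA''] at h
          simp [gt1, Finset.mem_insert] at h
          omega
        have hdegne : ∀ t, t ≠ t1 → degA A'' t = degA A' t := by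
          intro t ht
          have h := degA_update A' j0 (insert t1 (A' j0)) t
          rw [← hA''] at h
          by_cases h2 : t ∈ A' j0
          · simp [h2, Finset.mem_insert] at h; omega
          · simp [h2, Finset.mem_insert, ht] at h; omega
        apply ih A''
        · intro j
          by_cases h : j = j0
          · subst h; rw [hA'', Function.update_self]
            intro x hx
            rcases Finset.mem_insert.1 hx with h | h
            · exact h ▸ ht1E
            · exact g1 _ h
          · rw [hA'', Function.update_of_ne h]; exact g1 j
        · intro j
          rw [hcard'' j]
          by_cases h : j = j0
          · subst h; simp; omega
          · simp [h]; exact hcard j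
        · intro t htT
          by_cases h : t = t1
          · subst h
            rw [hdegt1]
            rcases gcase with ⟨heq, rfl⟩ | ⟨e1, e2⟩
            · subst heq; have := hdeg t htT; omega
            · have := hdeg t htT; omega
          · rw [hdegne t h]
            by_cases h2 : t = u
            · subst h2
              rcases gcase with ⟨heq, rfl⟩ | ⟨e1, e2⟩
              · exact absurd heq.symm h
              · have := hdeg t htT; omega
            · rw [g3 t h h2]; exact hdeg t htT
        · -- measure decreased
          have : ∑ j, (p j - (A'' j).card) + 1 ≤ ∑ j, (p j - (A j).card) := by
            have hterm : ∀ j, j ≠ j0 → p j - (A'' j).card = p j - (A j).card := by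
              intro j h; rw [hcard'' j, if_neg h]
            rw [← Finset.add_sum_erase Finset.univ (fun j => p j - (A'' j).card)
                  (Finset.mem_univ j0),
                ← Finset.add_sum_erase Finset.univ (fun j => p j - (A j).card)
                  (Finset.mem_univ j0)]
            have h1 : ∑ j ∈ Finset.univ.erase j0, (p j - (A'' j).card)
                = ∑ j ∈ Finset.univ.erase j0, (p j - (A j).card) :=
              Finset.sum_congr rfl (fun j hj => hterm j (Finset.mem_erase.1 hj).1)
            rw [h1, hcard'' j0, if_pos rfl]
            omega
          omega
      · -- cut argument: contradiction
        exfalso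
        push_neg at hfree
        have hQT : Q ⊆ T := Finset.filter_subset _ _
        have key1 : ∀ t ∈ Q, degA A t = mb t :=
          fun t ht => le_antisymm (hdeg t (hQT ht)) (hfree t ht)
        have hperle : ∀ j, (A j ∩ Q).card ≤ p j - (E j \ Q).card := by
          intro j
          by_cases hj : (A j ∩ Q).Nonempty
          · obtain ⟨t, htm⟩ := hj
            have hEQ : ∀ t', t' ∈ E j → t' ∉ Q → t' ∈ A j := by
              intro t' h1 h2
              by_contra h3
              exact h2 (hclosed t (Finset.mem_inter.1 htm).2 j (Finset.mem_inter.1 htm).1 t' h1 h3)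
            have hsubd : E j \ Q ⊆ A j \ Q := fun t' ht' => by
              rw [Finset.mem_sdiff] at ht' ⊢
              exact ⟨hEQ t' ht'.1 ht'.2, ht'.2⟩
            have : (A j ∩ Q).card + (E j \ Q).card ≤ (A j).card := by
              have := Finset.card_le_card hsubd
              have hdisj : (A j ∩ Q).card + (A j \ Q).card = (A j).card := by
                rw [Finset.card_inter_add_card_sdiff]
              omega
            have := hcard j
            omega
          · rw [Finset.not_nonempty_iff_eq_empty.1 hj]
            simp
        have hstrict : (A j0 ∩ Q).card < p j0 - (E j0 \ Q).card := by
          have hsubd : E j0 \ Q ⊆ A j0 \ Q := fun t' ht' => by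
            rw [Finset.mem_sdiff] at ht' ⊢
            refine ⟨?_, ht'.2⟩
            by_contra h3
            exact ht'.2 (hseed t' ht'.1 h3)
          have h4 := Finset.card_le_card hsubd
          have hdisj : (A j0 ∩ Q).card + (A j0 \ Q).card = (A j0).card :=
            Finset.card_inter_add_card_sdiff _ _
          omega
        have hlt : ∑ j, (A j ∩ Q).card < ∑ j, (p j - (E j \ Q).card) :=
          Finset.sum_lt_sum (fun j _ => hperle j) ⟨j0, Finset.mem_univ j0, hstrict⟩
        have heq : ∑ t ∈ Q, degA A t = ∑ t ∈ Q, mb t :=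
          Finset.sum_congr rfl key1
        have := HDu Q hQT
        rw [sum_degA] at heq
        omega

theorem phase2 (T : Finset ℕ) (E : J → Finset ℕ) (p : J → ℕ) (lb mb : ℕ → ℕ)
    (hET : ∀ j, E j ⊆ T) (hlm : ∀ t ∈ T, lb t ≤ mb t)
    (HLo : ∀ Q ⊆ T, ∑ t ∈ Q, lb t ≤ ∑ j, min (p j) ((E j ∩ Q).card)) :
    ∀ (n : ℕ) (A : J → Finset ℕ), (∀ j, A j ⊆ E j) → (∀ j, (A j).card = p j) →
      (∀ t ∈ T, degA A t ≤ mb t) → (∑ t ∈ T, (lb t - degA A t)) ≤ n →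
      ∃ A', (∀ j, A' j ⊆ E j) ∧ (∀ j, (A' j).card = p j) ∧
        (∀ t ∈ T, degA A' t ≤ mb t) ∧ (∀ t ∈ T, lb t ≤ degA A' t) := by
  classical
  intro n
  induction n with
  | zero =>
      intro A hsub hcard hdeg hm
      refine ⟨A, hsub, hcard, hdeg, fun t ht => ?_⟩
      have := Finset.sum_eq_zero_iff.1 (Nat.le_zero.1 hm) t ht
      omega
  | succ n ih =>
      intro A hsub hcard hdeg hm
      by_cases hall : ∀ t ∈ T, lb t ≤ degA A t
      · exact ⟨A, hsub, hcard, hdeg, hall⟩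
      push_neg at hall
      obtain ⟨t0, ht0T, ht0⟩ := hall
      set S : Finset ℕ := T.filter (fun t => Relation.ReflTransGen (R2 E A) t0 t) with hS
      have ht0S : t0 ∈ S := Finset.mem_filter.2 ⟨ht0T, Relation.ReflTransGen.refl⟩
      have hclosed : ∀ t ∈ S, ∀ j, t ∈ E j → t ∉ A j → ∀ t', t' ∈ A j → t' ∈ S := by
        intro t ht j h1 h2 t' h3
        obtain ⟨htT, hpath⟩ := Finset.mem_filter.1 ht
        exact Finset.mem_filter.2 ⟨hET j (hsub j h3), hpath.tail ⟨j, h1, h2, h3⟩⟩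
      by_cases hsur : ∃ u ∈ S, lb u < degA A u
      · -- augment along a path from t0 to u
        obtain ⟨u, huS, hu⟩ := hsur
        obtain ⟨huT, hpath⟩ := Finset.mem_filter.1 huS
        have hne : t0 ≠ u := by
          intro h; subst h; omega
        obtain ⟨l, hch, hnd⟩ := exists_nodup_path hpath hne
        obtain ⟨A', g1, g2, g3, g4, g5⟩ := move2 E l A t0 u hsub hch hnd
        apply ih A' g1 (fun j => (g2 j).trans (hcard j))
        · intro t htT
          by_cases h : t = t0
          · subst h; rw [g4]
            have := hlm t htT
            omega
          · by_cases h2 : t = u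
            · subst h2
              have := hdeg t htT
              omega
            · rw [g3 t h h2]; exact hdeg t htT
        · have hlt : ∑ t ∈ T, (lb t - degA A' t) < ∑ t ∈ T, (lb t - degA A t) := by
            apply Finset.sum_lt_sum
            · intro t htT
              by_cases h : t = t0
              · subst h; rw [g4]; omega
              · by_cases h2 : t = u
                · subst h2; omega
                · rw [g3 t h h2]
            · exact ⟨t0, ht0T, by rw [g4]; omega⟩
          omega
      · -- cut argument
        exfalso
        push_neg at hsur
        have hST : S ⊆ T := Finset.filter_subset _ _
        have hperle : ∀ j, min (p j) ((E j ∩ S).card) ≤ (A j ∩ S).card := by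
          intro j
          by_cases hj : ∃ t ∈ S, t ∈ E j ∧ t ∉ A j
          · obtain ⟨t, htS, h1, h2⟩ := hj
            have hAS : A j ⊆ S := fun t' ht' => hclosed t htS j h1 h2 t' ht'
            have : A j ∩ S = A j := Finset.inter_eq_left.2 hAS
            rw [this, hcard j]
            exact min_le_left _ _
          · push_neg at hj
            have hES : E j ∩ S ⊆ A j ∩ S := by
              intro t ht
              rcases Finset.mem_inter.1 ht with ⟨h1, h2⟩
              exact Finset.mem_inter.2 ⟨hj t h2 h1, h2⟩
            exact le_trans (min_le_right _ _) (Finset.card_le_card hES)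
        have hdegS : ∑ t ∈ S, degA A t < ∑ t ∈ S, lb t := by
          apply Finset.sum_lt_sum
          · exact fun t ht => hsur t ht
          · exact ⟨t0, ht0S, ht0⟩
        have hsum : ∑ t ∈ S, degA A t = ∑ j, (A j ∩ S).card := sum_degA A S
        have hHL := HLo S hST
        have : ∑ j, min (p j) ((E j ∩ S).card) ≤ ∑ j, (A j ∩ S).card :=
          Finset.sum_le_sum (fun j _ => hperle j)
        omega

theorem core (T : Finset ℕ) (E : J → Finset ℕ) (p : J → ℕ) (lb mb : ℕ → ℕ)
    (hET : ∀ j, E j ⊆ T) (hlm : ∀ t ∈ T, lb t ≤ mb t)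
    (HDu : ∀ Q ⊆ T, ∑ j, (p j - ((E j) \ Q).card) ≤ ∑ t ∈ Q, mb t)
    (HLo : ∀ Q ⊆ T, ∑ t ∈ Q, lb t ≤ ∑ j, min (p j) ((E j ∩ Q).card)) :
    ∃ A : J → Finset ℕ, (∀ j, A j ⊆ E j) ∧ (∀ j, (A j).card = p j) ∧
      (∀ t ∈ T, lb t ≤ degA A t ∧ degA A t ≤ mb t) := by
  classical
  obtain ⟨A1, h1, h2, h3⟩ := phase1 T E p mb hET HDu (∑ j, p j) (fun _ => ∅)
    (fun j => Finset.empty_subset _) (fun j => by simp)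
    (fun t _ => by simp [degA]) (by simp)
  obtain ⟨A2, k1, k2, k3, k4⟩ := phase2 T E p lb mb hET hlm HLo (∑ t ∈ T, lb t) A1 h1 h2 h3
    (Finset.sum_le_sum (fun t _ => Nat.sub_le _ _))
  exact ⟨A2, k1, k2, fun t ht => ⟨k4 t ht, k3 t ht⟩⟩

/-- The canonical schedule associated to an assignment `A`. -/
noncomputable def mkSched (A : J → Finset ℕ) (m : ℕ) : Fin m → ℕ → Option J :=
  fun k t =>
    if h : (k : ℕ) < (Finset.univ.filter (fun j => t ∈ A j)).card then
      some (((Finset.univ.filter (fun j => t ∈ A j)).equivFin.symm ⟨k, h⟩ : _) : J)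
    else none

theorem mkSched_some {A : J → Finset ℕ} {m : ℕ} {k : Fin m} {t : ℕ} {j : J}
    (h : mkSched A m k t = some j) : t ∈ A j := by
  classical
  rw [mkSched] at h
  split at h
  · rename_i hlt
    have := ((Finset.univ.filter (fun j => t ∈ A j)).equivFin.symm ⟨k, hlt⟩).2
    rw [Option.some_inj] at h
    rw [h] at this
    exact (Finset.mem_filter.1 this).2
  · exact absurd h (by simp)

theorem mkSched_inj {A : J → Finset ℕ} {m : ℕ} {k k' : Fin m} {t : ℕ} {j : J}
    (h : mkSched A m k t = some j) (h' : mkSched A m k' t = some j) : k = k' := by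
  classical
  rw [mkSched] at h h'
  split at h
  · rename_i hlt
    split at h'
    · rename_i hlt'
      rw [Option.some_inj] at h h'
      have heq : ((Finset.univ.filter (fun j => t ∈ A j)).equivFin.symm ⟨k, hlt⟩ : _)
          = ((Finset.univ.filter (fun j => t ∈ A j)).equivFin.symm ⟨k', hlt'⟩ : _) :=
        Subtype.ext (h.trans h'.symm)
      have h2 := (Finset.univ.filter (fun j => t ∈ A j)).equivFin.symm.injective heq
      rw [Fin.mk.injEq] at h2
      exact Fin.ext h2
    · exact absurd h' (by simp)
  · exact absurd h (by simp)

theorem mkSched_count {A : J → Finset ℕ} {m : ℕ} {t : ℕ} {j : J}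
    (hm : degA A t ≤ m) :
    (Finset.univ.filter (fun k : Fin m => mkSched A m k t = some j)).card
      = if t ∈ A j then 1 else 0 := by
  classical
  by_cases hj : t ∈ A j
  · rw [if_pos hj]
    have hjJt : j ∈ Finset.univ.filter (fun j => t ∈ A j) := Finset.mem_filter.2 ⟨Finset.mem_univ _, hj⟩
    set Jt := Finset.univ.filter (fun j => t ∈ A j) with hJt
    set i := Jt.equivFin ⟨j, hjJt⟩ with hi
    have hilt : (i : ℕ) < Jt.card := i.isLt
    have hideg : Jt.card = degA A t := rfl
    set k0 : Fin m := ⟨(i : ℕ), lt_of_lt_of_le hilt (hideg ▸ hm)⟩ with hk0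
    rw [Finset.card_eq_one]
    refine ⟨k0, ?_⟩
    ext k
    simp only [Finset.mem_filter, Finset.mem_univ, true_and, Finset.mem_singleton]
    constructor
    · intro h
      rw [mkSched] at h
      split at h
      · rename_i hlt
        rw [Option.some_inj] at h
        have heq : Jt.equivFin.symm ⟨k, hlt⟩ = ⟨j, hjJt⟩ := Subtype.ext h
        have h3 : (⟨k, hlt⟩ : Fin Jt.card) = i := by
          rw [hi, ← heq, Equiv.apply_symm_apply]
        have hv : ((⟨k, hlt⟩ : Fin Jt.card) : ℕ) = (i : ℕ) := by rw [h3]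
        exact Fin.ext hv
      · exact absurd h (by simp)
    · rintro rfl
      rw [mkSched]
      have hlt : ((k0 : Fin m) : ℕ) < Jt.card := hilt
      rw [dif_pos hlt, Option.some_inj]
      have : (⟨(k0 : ℕ), hlt⟩ : Fin Jt.card) = i := Fin.ext rfl
      rw [this, hi, Equiv.symm_apply_apply]
  · rw [if_neg hj]
    rw [Finset.card_eq_zero, Finset.filter_eq_empty_iff]
    intro k _
    intro h
    exact hj (mkSched_some h)

theorem mkSched_volT {A : J → Finset ℕ} {m : ℕ} {t : ℕ} (hm : degA A t ≤ m) :
    (Finset.univ.filter (fun k : Fin m => (mkSched A m k t).isSome)).card = degA A t := by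
  classical
  have hdd : degA A t = (Finset.univ.filter (fun j => t ∈ A j)).card := rfl
  have hset : Finset.univ.filter (fun k : Fin m => (mkSched A m k t).isSome)
      = Finset.univ.filter
          (fun k : Fin m => (k : ℕ) < (Finset.univ.filter (fun j => t ∈ A j)).card) := by
    ext k
    simp only [Finset.mem_filter, Finset.mem_univ, true_and]
    rw [mkSched]
    constructor
    · intro h
      by_contra hc
      rw [dif_neg hc] at h
      simp at h
    · intro h
      rw [dif_pos h]
      simp
  rw [hset]
  rw [show degA A t = (Finset.range (degA A t)).card from (Finset.card_range _).symm]
  apply Finset.card_bij (fun (k : Fin m) _ => (k : ℕ))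
  · intro k hk
    rw [Finset.mem_range, hdd]
    exact (Finset.mem_filter.1 hk).2
  · intro k _ k' _ hkk
    exact Fin.ext hkk
  · intro b hb
    rw [Finset.mem_range, hdd] at hb
    exact ⟨⟨b, lt_of_lt_of_le hb (hdd ▸ hm)⟩, Finset.mem_filter.2 ⟨Finset.mem_univ _, hb⟩, rfl⟩

end SchedAux

/-- An instance of deadline-scheduling-with-processor-bounds admits a feasible solution
if and only if `def(Q) ≤ 0` and `exc(Q) ≤ 0` for every subset `Q ⊆ T`. -/
theorem bounds_feasibility_characterization (J : Type) [Fintype J] [DecidableEq J]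
    (r dl p : J → ℕ) (hrd : ∀ j, r j ≤ dl j) (hp : ∀ j, p j ≤ dl j - r j + 1)
    (m : ℕ) (hm : 1 ≤ m)
    (lb mb : ℕ → ℕ)
    (hlm : ∀ t ∈ Tslots dl, lb t ≤ mb t) (hmb : ∀ t ∈ Tslots dl, mb t ≤ m) :
    (∃ S : Fin m → ℕ → Option J, Feasible r dl p m S ∧
      ∀ t ∈ Tslots dl, lb t ≤ volT S t ∧ volT S t ≤ mb t) ↔
    (∀ Q ⊆ Tslots dl, defQ r dl p mb Q ≤ 0 ∧ excQ r dl p lb Q ≤ 0) := by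

  classical
  have hET : ∀ j, Ei r dl j ⊆ Tslots dl := by
    intro j t ht
    rw [Ei, Finset.mem_Icc] at ht
    rw [Tslots, Finset.mem_Icc]
    exact ⟨Nat.zero_le _, le_trans ht.2 (Finset.le_sup (Finset.mem_univ j))⟩
  constructor
  · rintro ⟨S, ⟨hS1, hS2, hS3⟩, hSb⟩ Q hQT
    set A : J → Finset ℕ := fun j => (Tslots dl).filter (fun t => ∃ k, S k t = some j) with hA
    have hsubA : ∀ j, A j ⊆ Ei r dl j := by
      intro j t ht
      rw [hA] at ht
      obtain ⟨k, hk⟩ := (Finset.mem_filter.1 ht).2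
      exact hS1 k t j hk
    have hcount : ∀ (t : ℕ) (j : J), (Finset.univ.filter (fun k : Fin m => S k t = some j)).card
        = if (∃ k, S k t = some j) then 1 else 0 := by
      intro t j
      by_cases h : ∃ k, S k t = some j
      · rw [if_pos h]
        obtain ⟨k0, hk0⟩ := h
        rw [Finset.card_eq_one]
        refine ⟨k0, ?_⟩
        ext k
        simp only [Finset.mem_filter, Finset.mem_univ, true_and, Finset.mem_singleton]
        exact ⟨fun hk => hS3 t j k k0 hk hk0, fun h => h ▸ hk0⟩
      · rw [if_neg h, Finset.card_eq_zero, Finset.filter_eq_empty_iff]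
        exact fun k _ hk => h ⟨k, hk⟩
    have hcardA : ∀ j, (A j).card = p j := by
      intro j
      have e0 := hS2 j
      rw [Finset.card_filter, Finset.sum_product, Finset.sum_comm] at e0
      have e1 : ∀ t, (∑ k : Fin m, if S k t = some j then 1 else 0)
          = if (∃ k, S k t = some j) then 1 else 0 := by
        intro t
        rw [← hcount t j, Finset.card_filter]
      rw [Finset.sum_congr rfl (fun t _ => e1 t)] at e0
      rw [hA, Finset.card_filter]
      exact e0
    have hdegvol : ∀ t ∈ Tslots dl, SchedAux.degA A t = volT S t := by
      intro t ht
      rw [SchedAux.degA, volT]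
      symm
      apply Finset.card_bij
        (fun (k : Fin m) (hk : k ∈ Finset.univ.filter (fun k => (S k t).isSome)) =>
          (S k t).get (Finset.mem_filter.1 hk).2)
      · intro k hk
        refine Finset.mem_filter.2 ⟨Finset.mem_univ _, ?_⟩
        rw [hA]
        refine Finset.mem_filter.2 ⟨ht, ⟨k, ?_⟩⟩
        exact (Option.some_get (Finset.mem_filter.1 hk).2).symm
      · intro k hk k' hk' heq
        have h1 : S k t = some ((S k t).get (Finset.mem_filter.1 hk).2) :=
          (Option.some_get _).symm
        have h2 : S k' t = some ((S k t).get (Finset.mem_filter.1 hk).2) := by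
          rw [heq]
          exact (Option.some_get _).symm
        exact hS3 t _ k k' h1 h2
      · intro j hj
        rw [Finset.mem_filter] at hj
        have : t ∈ A j := hj.2
        rw [hA] at this
        obtain ⟨k, hk⟩ := (Finset.mem_filter.1 this).2
        have hks : (S k t).isSome := by rw [hk]; rfl
        refine ⟨k, Finset.mem_filter.2 ⟨Finset.mem_univ _, hks⟩, ?_⟩
        simp only [hk, Option.get_some]
    have hsumdeg : ∑ t ∈ Q, SchedAux.degA A t = ∑ t ∈ Q, volT S t :=
      Finset.sum_congr rfl (fun t ht => hdegvol t (hQT ht))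
    constructor
    · -- deficiency
      rw [defQ, sub_nonpos]
      have hN : fvQ r dl p Q ≤ ∑ t ∈ Q, mb t := by
        have step1 : fvQ r dl p Q ≤ ∑ j, (A j ∩ Q).card := by
          rw [fvQ]
          apply Finset.sum_le_sum
          intro j _
          rw [fvJ]
          have h1 : (A j \ Q).card ≤ ((Ei r dl j) \ Q).card :=
            Finset.card_le_card (fun x hx => by
              rw [Finset.mem_sdiff] at hx ⊢
              exact ⟨hsubA j hx.1, hx.2⟩)
          have h2 : (A j ∩ Q).card + (A j \ Q).card = (A j).card :=
            Finset.card_inter_add_card_sdiff _ _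
          have h3 := hcardA j
          omega
        have step2 : ∑ j, (A j ∩ Q).card = ∑ t ∈ Q, volT S t := by
          rw [← SchedAux.sum_degA, hsumdeg]
        have step3 : ∑ t ∈ Q, volT S t ≤ ∑ t ∈ Q, mb t :=
          Finset.sum_le_sum (fun t ht => (hSb t (hQT ht)).2)
        omega
      calc (fvQ r dl p Q : ℤ) ≤ ((∑ t ∈ Q, mb t : ℕ) : ℤ) := by exact_mod_cast hN
        _ = ∑ t ∈ Q, (mb t : ℤ) := by push_cast; ring
    · -- excess
      rw [excQ, sub_nonpos]
      have hN : ∑ t ∈ Q, lb t ≤ pvQ r dl p Q := by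
        have step1 : ∑ t ∈ Q, lb t ≤ ∑ t ∈ Q, volT S t :=
          Finset.sum_le_sum (fun t ht => (hSb t (hQT ht)).1)
        have step2 : ∑ t ∈ Q, volT S t = ∑ j, (A j ∩ Q).card := by
          rw [← SchedAux.sum_degA, hsumdeg]
        have step3 : ∑ j, (A j ∩ Q).card ≤ pvQ r dl p Q := by
          rw [pvQ]
          apply Finset.sum_le_sum
          intro j _
          rw [pvJ]
          apply le_min
          · rw [← hcardA j]
            exact Finset.card_le_card (Finset.inter_subset_left)
          · exact Finset.card_le_card (fun x hx => by
              rw [Finset.mem_inter] at hx ⊢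
              exact ⟨hsubA j hx.1, hx.2⟩)
        omega
      calc (∑ t ∈ Q, (lb t : ℤ)) = ((∑ t ∈ Q, lb t : ℕ) : ℤ) := by push_cast; ring
        _ ≤ (pvQ r dl p Q : ℤ) := by exact_mod_cast hN
  · intro hQ
    have HDu : ∀ Q ⊆ Tslots dl, ∑ j, (p j - ((Ei r dl j) \ Q).card) ≤ ∑ t ∈ Q, mb t := by
      intro Q hQT
      have h := (hQ Q hQT).1
      rw [defQ, sub_nonpos] at h
      have h2 : (fvQ r dl p Q : ℤ) ≤ ((∑ t ∈ Q, mb t : ℕ) : ℤ) := by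
        rw [Nat.cast_sum]
        exact h
      have h3 : fvQ r dl p Q ≤ ∑ t ∈ Q, mb t := by exact_mod_cast h2
      rw [fvQ] at h3
      simp only [fvJ] at h3
      exact h3
    have HLo : ∀ Q ⊆ Tslots dl, ∑ t ∈ Q, lb t ≤ ∑ j, min (p j) ((Ei r dl j ∩ Q).card) := by
      intro Q hQT
      have h := (hQ Q hQT).2
      rw [excQ, sub_nonpos] at h
      have h2 : ((∑ t ∈ Q, lb t : ℕ) : ℤ) ≤ (pvQ r dl p Q : ℤ) := by
        rw [Nat.cast_sum]
        exact h
      have h3 : ∑ t ∈ Q, lb t ≤ pvQ r dl p Q := by exact_mod_cast h2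
      rw [pvQ] at h3
      simp only [pvJ] at h3
      exact h3
    obtain ⟨A, hA1, hA2, hA3⟩ := SchedAux.core (Tslots dl) (Ei r dl) p lb mb hET hlm HDu HLo
    have hdegm : ∀ t, SchedAux.degA A t ≤ m := by
      intro t
      by_cases ht : t ∈ Tslots dl
      · exact le_trans (hA3 t ht).2 (hmb t ht)
      · have : SchedAux.degA A t = 0 := by
          rw [SchedAux.degA, Finset.card_eq_zero, Finset.filter_eq_empty_iff]
          intro j _ hj
          exact ht (hET j (hA1 j hj))
        omega
    refine ⟨SchedAux.mkSched A m, ⟨?_, ?_, ?_⟩, ?_⟩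
    · exact fun k t j h => hA1 j (SchedAux.mkSched_some h)
    · intro j
      rw [Finset.card_filter, Finset.sum_product, Finset.sum_comm]
      have e1 : ∀ t, (∑ k : Fin m, if SchedAux.mkSched A m k t = some j then 1 else 0)
          = if t ∈ A j then 1 else 0 := by
        intro t
        rw [← Finset.card_filter]
        exact SchedAux.mkSched_count (hdegm t)
      rw [Finset.sum_congr rfl (fun t _ => e1 t), ← Finset.card_filter]
      rw [show (Tslots dl).filter (fun t => t ∈ A j) = A j from
        Finset.filter_mem_eq_inter.trans (Finset.inter_eq_right.2 (fun x hx => hET j (hA1 j hx)))]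
      exact hA2 j
    · exact fun t j k k' h h' => SchedAux.mkSched_inj h h'
    · intro t ht
      have : volT (SchedAux.mkSched A m) t = SchedAux.degA A t := SchedAux.mkSched_volT (hdegm t)
      rw [this]
      exact ⟨(hA3 t ht).1, (hA3 t ht).2⟩
end

section
/- Let Q ⊆ T and let k ≥ 1 be an integer such that fv(Q) > (k−1)·|Q| (i.e., the density of Q exceeds k−1). Then in every feasible schedule S there exists a slot t ∈ Q at which at least k processors are busy, i.e., vol_S(t) ≥ k. -/
open Finset

/-- If the density of `Q` exceeds `k − 1`, i.e. `fv(Q) > (k−1)·|Q|`, then every feasible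
schedule has some slot of `Q` with at least `k` busy processors. -/
theorem density_forces_processors (J : Type) [Fintype J] [DecidableEq J]
    (r dl p : J → ℕ) (hrd : ∀ j, r j ≤ dl j) (hp : ∀ j, p j ≤ dl j - r j + 1)
    (m : ℕ) (hm : 1 ≤ m)
    (Q : Finset ℕ) (hQ : Q ⊆ Tslots dl) (k : ℕ) (hk : 1 ≤ k)
    (hdens : (k - 1) * Q.card < fvQ r dl p Q) :
    ∀ S : Fin m → ℕ → Option J, Feasible r dl p m S →
      ∃ t ∈ Q, k ≤ volT S t := by
  intro S hS
  obtain ⟨h1, h2, h3⟩ := hS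
  by_contra hcon
  push_neg at hcon
  -- volT equals number of jobs scheduled at t
  have hA : ∀ t, volT S t =
      (Finset.univ.filter (fun j : J => ∃ k, S k t = some j)).card := by
    intro t
    unfold volT
    refine Finset.card_bij
      (fun kk hk => (S kk t).get (by simpa using (Finset.mem_filter.mp hk).2))
      ?_ ?_ ?_
    · intro a ha
      simp only [Finset.mem_filter, Finset.mem_univ, true_and]
      exact ⟨a, (Option.some_get _).symm⟩
    · intro a ha b hb hab
      have ha2 : (S a t).isSome := by simpa using (Finset.mem_filter.mp ha).2
      have hb2 : (S b t).isSome := by simpa using (Finset.mem_filter.mp hb).2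
      have ha' : S a t = some ((S b t).get hb2) := by
        rw [← hab]; exact (Option.some_get _).symm
      exact h3 t _ a b ha' (Option.some_get _).symm
    · intro j hj
      simp only [Finset.mem_filter, Finset.mem_univ, true_and] at hj
      obtain ⟨kk, hkk⟩ := hj
      refine ⟨kk, ?_, ?_⟩
      · simp [hkk]
      · simp [hkk]
  -- total volume in Q equals sum over slots of busy processors
  have hB : volQ S Q = ∑ t ∈ Q, volT S t := by
    unfold volQ volJ
    simp_rw [Finset.card_filter]
    rw [Finset.sum_comm]
    refine Finset.sum_congr rfl fun t ht => ?_
    rw [hA t, Finset.card_filter]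
  -- forced volume ≤ scheduled volume per job
  have hC : ∀ j, fvJ r dl p j Q ≤ volJ S j Q := by
    intro j
    have hp2 := h2 j
    set P := (Finset.univ ×ˢ Tslots dl).filter
      (fun kt : Fin m × ℕ => S kt.1 kt.2 = some j) with hP
    have hsplit : (P.filter (fun kt => kt.2 ∈ Q)).card
        + (P.filter (fun kt => kt.2 ∉ Q)).card = P.card :=
      Finset.card_filter_add_card_filter_not _
    have hin : (P.filter (fun kt => kt.2 ∈ Q)).card = volJ S j Q := by
      unfold volJ
      refine Finset.card_bij (fun kt _ => kt.2) ?_ ?_ ?_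
      · intro a ha
        simp only [hP, Finset.mem_filter, Finset.mem_product] at ha
        exact Finset.mem_filter.mpr ⟨ha.2, ⟨a.1, ha.1.2⟩⟩
      · intro a ha b hb hab
        simp only [hP, Finset.mem_filter, Finset.mem_product] at ha hb
        have := h3 a.2 j a.1 b.1 ha.1.2 (by rw [hab]; exact hb.1.2)
        exact Prod.ext this hab
      · intro t ht
        simp only [Finset.mem_filter] at ht
        obtain ⟨htQ, kk, hkk⟩ := ht
        refine ⟨(kk, t), ?_, rfl⟩
        simp only [hP, Finset.mem_filter, Finset.mem_product]
        exact ⟨⟨⟨Finset.mem_univ _, hQ htQ⟩, hkk⟩, htQ⟩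
    have hout : (P.filter (fun kt => kt.2 ∉ Q)).card ≤ (Ei r dl j \ Q).card := by
      refine Finset.card_le_card_of_injOn (fun kt => kt.2) ?_ ?_
      · intro a ha
        simp only [Finset.mem_coe, hP, Finset.mem_filter, Finset.mem_product] at ha
        exact Finset.mem_sdiff.mpr ⟨h1 a.1 a.2 j ha.1.2, ha.2⟩
      · intro a ha b hb hab
        simp only at hab
        simp only [Finset.coe_filter, Set.mem_setOf_eq, hP, Finset.mem_filter,
          Finset.mem_product] at ha hb
        have := h3 a.2 j a.1 b.1 ha.1.2 (by rw [hab]; exact hb.1.2)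
        exact Prod.ext this hab
    unfold fvJ
    omega
  have hvol : ∀ t ∈ Q, volT S t ≤ k - 1 := fun t ht =>
    Nat.le_sub_one_of_lt (hcon t ht)
  have hfin : fvQ r dl p Q ≤ (k - 1) * Q.card := by
    calc fvQ r dl p Q ≤ volQ S Q := Finset.sum_le_sum fun j _ => hC j
      _ = ∑ t ∈ Q, volT S t := hB
      _ ≤ ∑ _t ∈ Q, (k - 1) := Finset.sum_le_sum hvol
      _ = (k - 1) * Q.card := by rw [Finset.sum_const, smul_eq_mul, mul_comm]
  omega
end

section
/- Let T = {0, 1, …, d} be a finite set of integer time slots, q ≥ 0 a real number, and let B, B', N' ⊆ T with B' ⊆ N'. Suppose every maximal interval of consecutive integers contained in T \ B' intersects at most two maximal intervals of consecutive integers contained in T \ B. Then Σ_I min(|I|, q) ≤ 2·q·ν + |N'|, where the sum ranges over all maximal intervals I of consecutive integers contained in T \ B, and ν denotes the number of maximal intervals of consecutive integers contained in T \ N'. -/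
open Finset

/-- `I` is an inclusion-maximal interval of consecutive integers contained in `X`. -/
def IsMaxIntvl (X I : Finset ℕ) : Prop :=
  I.Nonempty ∧ I ⊆ X ∧ (∃ a b, I = Finset.Icc a b) ∧
  ∀ I' : Finset ℕ, I ⊆ I' → I' ⊆ X → (∃ a b, I' = Finset.Icc a b) → I' = I

noncomputable instance (X : Finset ℕ) : DecidablePred (IsMaxIntvl X) :=
  fun _ => Classical.dec _

/-- The collection of maximal intervals of consecutive integers contained in `X`. -/
noncomputable def maxIntvls (X : Finset ℕ) : Finset (Finset ℕ) :=
  X.powerset.filter (IsMaxIntvl X)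

lemma mem_maxIntvls {X I : Finset ℕ} : I ∈ maxIntvls X ↔ I ⊆ X ∧ IsMaxIntvl X I := by
  simp [maxIntvls, Finset.mem_filter, Finset.mem_powerset]

/-- Every nonempty interval contained in `X` extends to a maximal interval of `X`. -/
lemma exists_maxIntvl_superset {X J : Finset ℕ} (hJX : J ⊆ X) (hJne : J.Nonempty)
    (hJint : ∃ a b, J = Finset.Icc a b) :
    ∃ I ∈ maxIntvls X, J ⊆ I := by
  classical
  set S : Finset (Finset ℕ) :=
    X.powerset.filter (fun I => J ⊆ I ∧ ∃ a b, I = Finset.Icc a b) with hS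
  have hJS : J ∈ S := by
    simp [hS, Finset.mem_filter, Finset.mem_powerset, hJX, hJint]
  obtain ⟨I, hIS, hmax⟩ := S.exists_maximal ⟨J, hJS⟩
  simp only [hS, Finset.mem_filter, Finset.mem_powerset] at hIS
  obtain ⟨hIX, hJI, hIint⟩ := hIS
  refine ⟨I, mem_maxIntvls.mpr ⟨hIX, hJne.mono hJI, hIX, hIint, ?_⟩, hJI⟩
  intro I' hII' hI'X hI'int
  have hI'S : I' ∈ S := by
    simp [hS, Finset.mem_filter, Finset.mem_powerset, hI'X, hJI.trans hII', hI'int]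
  have : ¬ I < I' := fun hlt => lt_irrefl I (lt_of_lt_of_le hlt (hmax hI'S hlt.le))
  exact (Finset.Subset.antisymm_iff.mpr ⟨by
    by_contra h
    exact this (lt_of_le_of_ne hII' (fun he => h (he ▸ Finset.Subset.refl I'))), hII'⟩)

lemma exists_maxIntvl_mem {X : Finset ℕ} {x : ℕ} (hx : x ∈ X) :
    ∃ I ∈ maxIntvls X, x ∈ I := by
  obtain ⟨I, hI, hsub⟩ := exists_maxIntvl_superset (J := {x})
    (by simpa using hx) ⟨x, by simp⟩ ⟨x, x, by simp⟩
  exact ⟨I, hI, hsub (by simp)⟩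

/-- Two overlapping intervals merge into an interval. -/
lemma union_Icc {a b a' b' : ℕ} (h : ((Finset.Icc a b) ∩ (Finset.Icc a' b')).Nonempty) :
    Finset.Icc a b ∪ Finset.Icc a' b' = Finset.Icc (min a a') (max b b') := by
  obtain ⟨y, hy⟩ := h
  simp only [Finset.mem_inter, Finset.mem_Icc] at hy
  ext x
  simp only [Finset.mem_union, Finset.mem_Icc]
  omega

/-- Distinct maximal intervals are disjoint. -/
lemma maxIntvls_disjoint {X I I' : Finset ℕ} (hI : I ∈ maxIntvls X) (hI' : I' ∈ maxIntvls X)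
    (hne : I ≠ I') : Disjoint I I' := by
  classical
  rw [Finset.disjoint_left]
  intro x hxI hxI'
  obtain ⟨hIX, _, _, ⟨a, b, hab⟩, hImax⟩ := mem_maxIntvls.mp hI
  obtain ⟨hI'X, _, _, ⟨a', b', hab'⟩, hI'max⟩ := mem_maxIntvls.mp hI'
  have hnon : ((Finset.Icc a b) ∩ (Finset.Icc a' b')).Nonempty :=
    ⟨x, Finset.mem_inter.mpr ⟨hab ▸ hxI, hab' ▸ hxI'⟩⟩
  have hU : I ∪ I' = Finset.Icc (min a a') (max b b') := by
    rw [hab, hab']; exact union_Icc hnon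
  have h1 : I ∪ I' = I := hImax _ Finset.subset_union_left
    (Finset.union_subset hIX hI'X) ⟨_, _, hU⟩
  have h2 : I ∪ I' = I' := hI'max _ Finset.subset_union_right
    (Finset.union_subset hIX hI'X) ⟨_, _, hU⟩
  exact hne (h1 ▸ h2)

/-- If every maximal interval of `T \ B'` intersects at most two maximal intervals of
`T \ B`, then `Σ_I min(|I|, q)` over the maximal intervals `I` of `T \ B` is at most
`2·q·ν + |N'|`, where `ν` is the number of maximal intervals of `T \ N'`. -/
theorem idle_cost_bound (d : ℕ) (q : ℝ) (hq : 0 ≤ q)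
    (B B' N' : Finset ℕ)
    (hB : B ⊆ Finset.Icc 0 d) (hB' : B' ⊆ Finset.Icc 0 d) (hN' : N' ⊆ Finset.Icc 0 d)
    (hB'N' : B' ⊆ N')
    (hint : ∀ I' ∈ maxIntvls (Finset.Icc 0 d \ B'),
      ((maxIntvls (Finset.Icc 0 d \ B)).filter (fun I => (I ∩ I').Nonempty)).card ≤ 2) :
    ∑ I ∈ maxIntvls (Finset.Icc 0 d \ B), min (I.card : ℝ) q ≤
      2 * q * ((maxIntvls (Finset.Icc 0 d \ N')).card : ℝ) + (N'.card : ℝ) := by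
  classical
  set T := Finset.Icc 0 d with hT
  set M := maxIntvls (T \ B) with hM
  set ν := maxIntvls (T \ N') with hν
  -- Step 1: pointwise bound
  have step1 : ∀ I ∈ M, min (I.card : ℝ) q ≤
      ((I ∩ N').card : ℝ) + (if (I \ N').Nonempty then q else 0) := by
    intro I _
    by_cases h : (I \ N').Nonempty
    · simp only [h, if_pos]
      have h1 : min (I.card : ℝ) q ≤ q := min_le_right _ _
      have h0 : (0:ℝ) ≤ ((I ∩ N').card : ℝ) := by positivity
      linarith
    · simp only [h, if_neg, not_false_iff, add_zero]
      have he : I \ N' = ∅ := Finset.not_nonempty_iff_eq_empty.mp h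
      have hcard : (I ∩ N').card = I.card := by
        have h2 := Finset.card_inter_add_card_sdiff I N'
        rw [he] at h2; simpa using h2
      rw [hcard]; exact min_le_left _ _
  have hsum1 : ∑ I ∈ M, min (I.card : ℝ) q ≤
      ∑ I ∈ M, (((I ∩ N').card : ℝ) + (if (I \ N').Nonempty then q else 0)) :=
    Finset.sum_le_sum step1
  rw [Finset.sum_add_distrib] at hsum1
  -- Step 2: sum of intersections ≤ |N'|
  have step2 : ∑ I ∈ M, ((I ∩ N').card : ℝ) ≤ (N'.card : ℝ) := by
    have hdisj : ∀ x ∈ M, ∀ y ∈ M, x ≠ y → Disjoint (x ∩ N') (y ∩ N') := by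
      intro x hx y hy hxy
      exact (maxIntvls_disjoint hx hy hxy).mono Finset.inter_subset_left
        Finset.inter_subset_left
    have hbU := Finset.card_biUnion hdisj
    have hsub : M.biUnion (fun I => I ∩ N') ⊆ N' := by
      intro x hx
      simp only [Finset.mem_biUnion] at hx
      obtain ⟨I, _, hxI⟩ := hx
      exact (Finset.mem_inter.mp hxI).2
    have : ∑ I ∈ M, (I ∩ N').card ≤ N'.card := hbU ▸ Finset.card_le_card hsub
    calc ∑ I ∈ M, ((I ∩ N').card : ℝ) = ((∑ I ∈ M, (I ∩ N').card : ℕ) : ℝ) := by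
          push_cast; ring
      _ ≤ (N'.card : ℝ) := by exact_mod_cast this
  -- Step 3: counting intervals meeting T \ N'
  have step3 : (M.filter (fun I => (I \ N').Nonempty)).card ≤ 2 * ν.card := by
    have hsub : M.filter (fun I => (I \ N').Nonempty) ⊆
        ν.biUnion (fun J => M.filter (fun I => (I ∩ J).Nonempty)) := by
      intro I hI
      simp only [Finset.mem_filter] at hI
      obtain ⟨hIM, x, hx⟩ := hI
      have hIsub : I ⊆ T \ B := (mem_maxIntvls.mp hIM).1
      have hxI : x ∈ I := (Finset.mem_sdiff.mp hx).1
      have hxTN : x ∈ T \ N' := by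
        have hxTB := hIsub hxI
        simp only [Finset.mem_sdiff] at hxTB hx ⊢
        exact ⟨hxTB.1, hx.2⟩
      obtain ⟨J, hJ, hxJ⟩ := exists_maxIntvl_mem hxTN
      simp only [Finset.mem_biUnion]
      exact ⟨J, hJ, Finset.mem_filter.mpr ⟨hIM, ⟨x, Finset.mem_inter.mpr ⟨hxI, hxJ⟩⟩⟩⟩
    calc (M.filter (fun I => (I \ N').Nonempty)).card
        ≤ (ν.biUnion (fun J => M.filter (fun I => (I ∩ J).Nonempty))).card :=
          Finset.card_le_card hsub
      _ ≤ ∑ J ∈ ν, (M.filter (fun I => (I ∩ J).Nonempty)).card :=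
          Finset.card_biUnion_le
      _ ≤ ∑ _J ∈ ν, 2 := by
          apply Finset.sum_le_sum
          intro J hJ
          obtain ⟨hJsub, hJne, _, hJint, _⟩ := mem_maxIntvls.mp hJ
          have hJB' : J ⊆ T \ B' := by
            intro x hx
            have := hJsub hx
            simp only [Finset.mem_sdiff] at this ⊢
            exact ⟨this.1, fun h => this.2 (hB'N' h)⟩
          obtain ⟨I', hI', hJI'⟩ := exists_maxIntvl_superset hJB' hJne hJint
          refine le_trans (Finset.card_le_card ?_) (hint I' hI')
          intro I hI
          simp only [Finset.mem_filter] at hI ⊢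
          exact ⟨hI.1, hI.2.mono (Finset.inter_subset_inter (Finset.Subset.refl _) hJI')⟩
      _ = 2 * ν.card := by rw [Finset.sum_const, smul_eq_mul, mul_comm]
  -- Step 4: combine
  have step4 : ∑ I ∈ M, (if (I \ N').Nonempty then q else 0) ≤ 2 * q * (ν.card : ℝ) := by
    rw [← Finset.sum_filter, Finset.sum_const, nsmul_eq_mul]
    have hc : ((M.filter (fun I => (I \ N').Nonempty)).card : ℝ) ≤ 2 * (ν.card : ℝ) := by
      exact_mod_cast step3
    calc ((M.filter (fun I => (I \ N').Nonempty)).card : ℝ) * q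
        ≤ (2 * (ν.card : ℝ)) * q := mul_le_mul_of_nonneg_right hc hq
      _ = 2 * q * (ν.card : ℝ) := by ring
  linarith
end

section
/- The instance admits a feasible schedule on m processors if and only if fv(Q) ≤ m·|Q| for every subset Q ⊆ T. -/
open Finset

namespace SchedAux

set_option linter.unusedSectionVars false

variable {J : Type} [Fintype J] [DecidableEq J]

/-- Number of jobs using slot `t` in partial assignment `A`. -/
def load (A : J → Finset ℕ) (t : ℕ) : ℕ := (univ.filter fun j => t ∈ A j).card

/-- Total volume of a partial assignment. -/
def total (A : J → Finset ℕ) : ℕ := ∑ j, (A j).card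

lemma Ei_subset_Tslots (r dl : J → ℕ) (j : J) : Ei r dl j ⊆ Tslots dl := by
  intro t ht
  simp only [Ei, mem_Icc] at ht
  simp only [Tslots, mem_Icc]
  exact ⟨Nat.zero_le _, le_trans ht.2 (Finset.le_sup (mem_univ j))⟩

variable (r dl p : J → ℕ) (m : ℕ)

/-- Valid partial assignment. -/
def PValid (A : J → Finset ℕ) : Prop :=
  (∀ j, A j ⊆ Ei r dl j) ∧ (∀ j, (A j).card ≤ p j) ∧ (∀ t, load A t ≤ m)

/-- Weak alternating tail of length `n` starting at job `j` and ending at a free slot. -/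
def WT (A : J → Finset ℕ) : J → ℕ → Prop
  | j, 0 => ∃ t, t ∈ Ei r dl j ∧ t ∉ A j ∧ load A t < m
  | j, n+1 => ∃ t j', t ∈ Ei r dl j ∧ t ∉ A j ∧ t ∈ A j' ∧ WT A j' n

variable {r dl p m}

lemma load_insert (A : J → Finset ℕ) {j : J} {t : ℕ} (h : t ∉ A j) :
    ∀ u, load (Function.update A j (insert t (A j))) u
      = if u = t then load A u + 1 else load A u := by
  intro u
  by_cases hu : u = t
  · subst hu
    simp only [if_pos rfl, load]
    have : (univ.filter fun k => u ∈ Function.update A j (insert u (A j)) k)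
        = insert j (univ.filter fun k => u ∈ A k) := by
      ext k
      by_cases hk : k = j
      · subst hk; simp [Function.update_self]
      · simp [Function.update_of_ne hk, hk]
    rw [this, card_insert_of_notMem (by simp [h])]
    simp [load]
  · simp only [if_neg hu, load]
    congr 1
    apply filter_congr
    intro k _
    by_cases hk : k = j
    · subst hk; simp [Function.update_self, hu]
    · simp [Function.update_of_ne hk]


section Swap

variable (A : J → Finset ℕ) (j j' : J) (t : ℕ)

/-- Move slot `t` from job `j'` to job `j`. -/
def swap : J → Finset ℕ :=
  Function.update (Function.update A j (insert t (A j))) j' (A j' \ {t})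

variable {A j j' t}
variable (hne : j ≠ j') (hAj : t ∉ A j) (hAj' : t ∈ A j')

include hne in
lemma swap_apply_j : swap A j j' t j = insert t (A j) := by
  simp [swap, Function.update_of_ne hne, Function.update_self]

lemma swap_apply_j' : swap A j j' t j' = A j' \ {t} := by
  simp [swap, Function.update_self]

lemma swap_apply_other {k : J} (hk : k ≠ j) (hk' : k ≠ j') :
    swap A j j' t k = A k := by
  simp [swap, Function.update_of_ne hk, Function.update_of_ne hk']

include hne hAj hAj' in
lemma mem_swap_iff {u : ℕ} {k : J} :
    u ∈ swap A j j' t k ↔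
      (if k = j then u = t ∨ u ∈ A j else if k = j' then u ∈ A j' ∧ u ≠ t else u ∈ A k) := by
  by_cases hk : k = j
  · subst hk; rw [swap_apply_j hne]; simp
  · by_cases hk' : k = j'
    · subst hk'; rw [swap_apply_j']; simp [hk]
    · rw [swap_apply_other hk hk']; simp [hk, hk']

include hne hAj hAj' in
lemma load_swap : ∀ u, load (swap A j j' t) u = load A u := by
  intro u
  by_cases hu : u = t
  · subst hu
    have hset : (univ.filter fun k => u ∈ swap A j j' u k)
        = insert j ((univ.filter fun k => u ∈ A k).erase j') := by
      ext k
      simp only [mem_filter, mem_univ, true_and, mem_insert, mem_erase]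
      rw [mem_swap_iff hne hAj hAj']
      by_cases hk : k = j
      · subst hk; simp [hne]
      · by_cases hk' : k = j'
        · subst hk'; simp [hk, hAj']
        · simp [hk, hk', and_comm]
    have hj' : j' ∈ univ.filter fun k => u ∈ A k := by simp [hAj']
    have hjn : j ∉ (univ.filter fun k => u ∈ A k).erase j' := by
      simp [hAj]
    rw [load, hset, card_insert_of_notMem hjn, card_erase_of_mem hj', load]
    have : 1 ≤ #(filter (fun k => u ∈ A k) univ) := card_pos.2 ⟨j', hj'⟩
    omega
  · unfold load
    congr 1
    apply filter_congr
    intro k _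
    rw [mem_swap_iff hne hAj hAj']
    by_cases hk : k = j
    · subst hk; simp [hu]
    · by_cases hk' : k = j'
      · subst hk'; simp [hk, hu]
      · simp [hk, hk']

include hne hAj hAj' in
lemma total_swap : total (swap A j j' t) = total A := by
  have key : ∀ B : J → Finset ℕ,
      total B = (B j').card + ((B j).card + ∑ x ∈ (univ.erase j').erase j, (B x).card) := by
    intro B
    unfold total
    rw [← Finset.sum_erase_add _ _ (mem_univ j'),
      ← Finset.sum_erase_add _ _ (by simp [hne] : j ∈ univ.erase j')]
    ring
  rw [key (swap A j j' t), key A]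
  have h1 : (swap A j j' t j').card = (A j').card - 1 := by
    rw [swap_apply_j', card_sdiff_of_subset (by simp [hAj'])]; simp
  have h2 : (swap A j j' t j).card = (A j).card + 1 := by
    rw [swap_apply_j hne, card_insert_of_notMem hAj]
  have h3 : ∑ x ∈ (univ.erase j').erase j, (swap A j j' t x).card
      = ∑ x ∈ (univ.erase j').erase j, (A x).card := by
    apply Finset.sum_congr rfl
    intro x hx
    simp only [mem_erase] at hx
    rw [swap_apply_other hx.1 hx.2.1]
  have hcard : 1 ≤ (A j').card := card_pos.2 ⟨t, hAj'⟩
  rw [h1, h2, h3]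
  omega

include hne hAj hAj' in
lemma pvalid_swap (hV : PValid r dl p m A) (hEj : t ∈ Ei r dl j)
    (hdef : (A j).card < p j) : PValid r dl p m (swap A j j' t) := by
  obtain ⟨hsub, hcard, hload⟩ := hV
  refine ⟨?_, ?_, ?_⟩
  · intro k u hu
    rw [mem_swap_iff hne hAj hAj'] at hu
    by_cases hk : k = j
    · subst hk; simp only [if_pos rfl] at hu
      rcases hu with h | h
      · subst h; exact hEj
      · exact hsub _ h
    · by_cases hk' : k = j'
      · subst hk'; simp only [if_neg hk, if_pos rfl] at hu; exact hsub _ hu.1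
      · simp only [if_neg hk, if_neg hk'] at hu; exact hsub _ hu
  · intro k
    by_cases hk : k = j
    · subst hk; rw [swap_apply_j hne, card_insert_of_notMem hAj]; omega
    · by_cases hk' : k = j'
      · subst hk'; rw [swap_apply_j']
        exact le_trans (card_le_card sdiff_subset) (hcard _)
      · rw [swap_apply_other hk hk']; exact hcard _
  · intro u; rw [load_swap hne hAj hAj']; exact hload u


include hne hAj hAj' in
lemma not_mem_swap {u : ℕ} {k : J} (h1 : u ∉ A k) (h2 : u ≠ t) : u ∉ swap A j j' t k := by
  rw [mem_swap_iff hne hAj hAj']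
  by_cases hk : k = j
  · subst hk; simp [h1, h2]
  · by_cases hk' : k = j'
    · subst hk'; simp [hk, h1]
    · simp [hk, hk', h1]

include hne hAj hAj' in
lemma mem_swap_of_ne {u : ℕ} {k : J} (h1 : u ∈ A k) (h2 : u ≠ t) : u ∈ swap A j j' t k := by
  rw [mem_swap_iff hne hAj hAj']
  by_cases hk : k = j
  · subst hk; simp [h1]
  · by_cases hk' : k = j'
    · subst hk'; simp [hk, h1, h2]
    · simp [hk, hk', h1]

include hne hAj hAj' in
lemma t_not_mem_swap {k : J} (hkj : k ≠ j) (h : t ∉ A k) : t ∉ swap A j j' t k := by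
  rw [mem_swap_iff hne hAj hAj']
  by_cases hk' : k = j'
  · subst hk'; simp [hkj]
  · simp [hkj, hk', h]

include hne hAj hAj' in
lemma t_mem_swap {k : J} (h : t ∈ A k) (hk' : k ≠ j') : t ∈ swap A j j' t k := by
  rw [mem_swap_iff hne hAj hAj']
  by_cases hk : k = j
  · subst hk; simp
  · simp [hk, hk', h]

include hne hAj hAj' in
lemma wt_fix (hEt : t ∈ Ei r dl j) (hload : m ≤ load A t) :
    ∀ n k, WT r dl m A k n →
      (∃ n' ≤ n, WT r dl m (swap A j j' t) k n') ∨ (∃ n'' ≤ n, WT r dl m A j n'') := by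
  intro n
  induction n with
  | zero =>
    intro k hk
    obtain ⟨s, hsE, hsA, hsl⟩ := hk
    have hst : s ≠ t := by
      intro h; subst h; exact absurd hsl (not_lt.2 hload)
    left
    exact ⟨0, le_refl 0, s, hsE, not_mem_swap hne hAj hAj' hsA hst,
      by rw [load_swap hne hAj hAj']; exact hsl⟩
  | succ n IH =>
    intro k hk
    obtain ⟨s, k'', hsE, hsA, hsA'', tail⟩ := hk
    by_cases hst : s = t
    · rw [hst] at hsE hsA hsA''
      by_cases hkj : k = j
      · rw [hkj] at hsE hsA
        exact Or.inr ⟨n + 1, le_refl _, t, k'', hsE, hsA, hsA'', tail⟩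
      · by_cases hk''j' : k'' = j'
        · rw [hk''j'] at tail
          exact Or.inr ⟨n + 1, le_refl _, t, j', hEt, hAj, hAj', tail⟩
        · have hk''j : k'' ≠ j := by intro h; rw [h] at hsA''; exact hAj hsA''
          rcases IH k'' tail with ⟨n', hn', w⟩ | ⟨n'', hn'', w⟩
          · exact Or.inl ⟨n' + 1, Nat.succ_le_succ hn', t, k'', hsE,
              t_not_mem_swap hne hAj hAj' hkj hsA,
              t_mem_swap hne hAj hAj' hsA'' hk''j', w⟩
          · exact Or.inr ⟨n'', le_trans hn'' (Nat.le_succ n), w⟩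
    · rcases IH k'' tail with ⟨n', hn', w⟩ | ⟨n'', hn'', w⟩
      · exact Or.inl ⟨n' + 1, Nat.succ_le_succ hn', s, k'', hsE,
          not_mem_swap hne hAj hAj' hsA hst,
          mem_swap_of_ne hne hAj hAj' hsA'' hst, w⟩
      · exact Or.inr ⟨n'', le_trans hn'' (Nat.le_succ n), w⟩

end Swap

lemma add_slot {A : J → Finset ℕ} {j : J} {t : ℕ} (hV : PValid r dl p m A)
    (hdef : (A j).card < p j) (hE : t ∈ Ei r dl j) (hA : t ∉ A j) (hl : load A t < m) :
    ∃ B, PValid r dl p m B ∧ total B = total A + 1 := by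
  obtain ⟨hsub, hcard, hload⟩ := hV
  refine ⟨Function.update A j (insert t (A j)), ⟨?_, ?_, ?_⟩, ?_⟩
  · intro k
    by_cases hk : k = j
    · rw [hk, Function.update_self]
      exact insert_subset hE (hsub j)
    · rw [Function.update_of_ne hk]; exact hsub k
  · intro k
    by_cases hk : k = j
    · rw [hk, Function.update_self, card_insert_of_notMem hA]; omega
    · rw [Function.update_of_ne hk]; exact hcard k
  · intro u
    rw [load_insert A hA u]
    by_cases hu : u = t
    · subst hu; rw [if_pos rfl]; omega
    · rw [if_neg hu]; exact hload u
  · unfold total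
    rw [← Finset.sum_erase_add _ _ (mem_univ j), ← Finset.sum_erase_add _ _ (mem_univ j)]
    have h1 : ∑ x ∈ univ.erase j, (Function.update A j (insert t (A j)) x).card
        = ∑ x ∈ univ.erase j, (A x).card := by
      apply Finset.sum_congr rfl
      intro x hx
      rw [Function.update_of_ne (mem_erase.1 hx).1]
    rw [h1, Function.update_self, card_insert_of_notMem hA]
    ring

lemma aug (n : ℕ) : ∀ A : J → Finset ℕ, PValid r dl p m A → ∀ j : J,
    (A j).card < p j → WT r dl m A j n →
    ∃ B, PValid r dl p m B ∧ total B = total A + 1 := by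
  induction n using Nat.strong_induction_on with
  | _ n IH =>
    intro A hV j hdef hwt
    match n with
    | 0 =>
      obtain ⟨t, hE, hA, hl⟩ := hwt
      exact add_slot hV hdef hE hA hl
    | Nat.succ n =>
      obtain ⟨t, j', hEt, hAt, hAt', tail⟩ := hwt
      by_cases hl : load A t < m
      · exact add_slot hV hdef hEt hAt hl
      · have hload : m ≤ load A t := not_lt.1 hl
        have hne : j ≠ j' := by intro h; subst h; exact hAt hAt'
        rcases wt_fix hne hAt hAt' hEt hload n j' tail with ⟨n', hn', w⟩ | ⟨n'', hn'', w⟩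
        · have hV' := pvalid_swap hne hAt hAt' hV hEt hdef
          have h1 : 1 ≤ (A j').card := card_pos.2 ⟨t, hAt'⟩
          have hdef' : ((swap A j j' t) j').card < p j' := by
            rw [swap_apply_j', card_sdiff_of_subset (by simp [hAt'])]
            have := hV.2.1 j'
            simp only [card_singleton]
            omega
          obtain ⟨B, hB, htot⟩ := IH n' (by omega) (swap A j j' t) hV' j' hdef' w
          exact ⟨B, hB, by rw [htot, total_swap hne hAt hAt']⟩
        · exact IH n'' (by omega) A hV j hdef w


/-- Jobs reachable from `j0` by alternating moves. -/
inductive Reach (re de : J → ℕ) (A : J → Finset ℕ) (j0 : J) : J → Prop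
  | base : Reach re de A j0 j0
  | step {j t j'} : Reach re de A j0 j → t ∈ Ei re de j → t ∉ A j → t ∈ A j' →
      Reach re de A j0 j'

lemma reach_wt {A : J → Finset ℕ} {j0 j : J} (h : Reach r dl A j0 j) :
    ∀ n, WT r dl m A j n → ∃ n', WT r dl m A j0 n' := by
  induction h with
  | base => exact fun n hn => ⟨n, hn⟩
  | @step j t j' _ hE hA hA' IH =>
    intro n hn
    exact IH (n + 1) ⟨t, j', hE, hA, hA', hn⟩

lemma cut_contra {A : J → Finset ℕ} {j0 : J} (hV : PValid r dl p m A)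
    (hcut : ∀ Q ⊆ Tslots dl, fvQ r dl p Q ≤ m * Q.card)
    (hdef : (A j0).card < p j0)
    (hnf : ∀ j, Reach r dl A j0 j → ∀ t ∈ Ei r dl j, t ∉ A j → m ≤ load A t) :
    False := by
  classical
  set RJ := univ.filter (fun j => Reach r dl A j0 j) with hRJ
  set Q := (Tslots dl).filter
    (fun t => ∃ j, Reach r dl A j0 j ∧ t ∈ Ei r dl j ∧ t ∉ A j) with hQ
  have hQsub : Q ⊆ Tslots dl := filter_subset _ _
  have hQmem : ∀ t, t ∈ Q ↔ t ∈ Tslots dl ∧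
      ∃ j, Reach r dl A j0 j ∧ t ∈ Ei r dl j ∧ t ∉ A j := by
    intro t; rw [hQ, mem_filter]
  have hEsub : ∀ j, Reach r dl A j0 j → Ei r dl j \ Q ⊆ A j := by
    intro j hj t ht
    rw [mem_sdiff] at ht
    by_contra htA
    exact ht.2 ((hQmem t).2 ⟨Ei_subset_Tslots r dl j ht.1, j, hj, ht.1, htA⟩)
  -- pointwise inequality
  have hptwise : ∀ j ∈ RJ, p j + (A j ∩ Q).card ≤ fvJ r dl p j Q + (A j).card := by
    intro j hj
    rw [hRJ, mem_filter] at hj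
    have h1 : Ei r dl j \ Q ⊆ A j \ Q := by
      intro t ht
      rw [mem_sdiff] at ht ⊢
      exact ⟨hEsub j hj.2 (mem_sdiff.2 ht), ht.2⟩
    have h2 : (Ei r dl j \ Q).card ≤ (A j \ Q).card := card_le_card h1
    have h3 : (A j \ Q).card + (A j ∩ Q).card = (A j).card :=
      Finset.card_sdiff_add_card_inter _ _
    have h4 : (A j).card ≤ p j := hV.2.1 j
    unfold fvJ
    omega
  have hsum1 : ∑ j ∈ RJ, p j + ∑ j ∈ RJ, (A j ∩ Q).card
      ≤ ∑ j ∈ RJ, fvJ r dl p j Q + ∑ j ∈ RJ, (A j).card := by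
    rw [← Finset.sum_add_distrib, ← Finset.sum_add_distrib]
    exact Finset.sum_le_sum hptwise
  have hj0RJ : j0 ∈ RJ := by rw [hRJ, mem_filter]; exact ⟨mem_univ _, Reach.base⟩
  have hstrict : ∑ j ∈ RJ, (A j).card < ∑ j ∈ RJ, p j :=
    Finset.sum_lt_sum (fun i _ => hV.2.1 i) ⟨j0, hj0RJ, hdef⟩
  -- the intersection sum equals m * |Q|
  have hAQ : ∑ j ∈ RJ, (A j ∩ Q).card = m * Q.card := by
    have hcard : ∀ j, (A j ∩ Q).card = ∑ t ∈ Q, if t ∈ A j then 1 else 0 := by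
      intro j
      rw [← Finset.card_filter]
      congr 1
      ext t
      simp [mem_inter, and_comm]
    calc ∑ j ∈ RJ, (A j ∩ Q).card = ∑ j ∈ RJ, ∑ t ∈ Q, if t ∈ A j then 1 else 0 := by
          exact Finset.sum_congr rfl (fun j _ => hcard j)
      _ = ∑ t ∈ Q, ∑ j ∈ RJ, if t ∈ A j then 1 else 0 := Finset.sum_comm
      _ = ∑ t ∈ Q, load A t := by
          apply Finset.sum_congr rfl
          intro t ht
          rw [← Finset.card_filter]
          unfold load
          congr 1
          ext j
          simp only [mem_filter, mem_univ, true_and, hRJ, and_iff_right_iff_imp]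
          intro htA
          obtain ⟨_, j'', hR'', hE'', hA''⟩ := (hQmem t).1 ht
          exact Reach.step hR'' hE'' hA'' htA
      _ = ∑ t ∈ Q, m := by
          apply Finset.sum_congr rfl
          intro t ht
          obtain ⟨_, j'', hR'', hE'', hA''⟩ := (hQmem t).1 ht
          exact le_antisymm (hV.2.2 t) (hnf j'' hR'' t hE'' hA'')
      _ = m * Q.card := by rw [Finset.sum_const, smul_eq_mul, mul_comm]
  have hfv : ∑ j ∈ RJ, fvJ r dl p j Q ≤ fvQ r dl p Q := by
    unfold fvQ
    exact Finset.sum_le_sum_of_subset (subset_univ RJ)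
  have hcutQ := hcut Q hQsub
  omega

lemma one_step {A : J → Finset ℕ} (hV : PValid r dl p m A)
    (hcut : ∀ Q ⊆ Tslots dl, fvQ r dl p Q ≤ m * Q.card)
    (hdef : ∃ j0, (A j0).card < p j0) :
    ∃ B, PValid r dl p m B ∧ total B = total A + 1 := by
  classical
  obtain ⟨j0, hdef⟩ := hdef
  by_cases hfree : ∃ j t, Reach r dl A j0 j ∧ t ∈ Ei r dl j ∧ t ∉ A j ∧ load A t < m
  · obtain ⟨j, t, hR, hE, hA, hl⟩ := hfree
    obtain ⟨n, hw⟩ := reach_wt hR 0 ⟨t, hE, hA, hl⟩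
    exact aug n A hV j0 hdef hw
  · have hnf : ∀ j, Reach r dl A j0 j → ∀ t ∈ Ei r dl j, t ∉ A j → m ≤ load A t :=
      fun j hR t htE htA =>
        le_of_not_gt (fun hl => hfree ⟨j, t, hR, htE, htA, hl⟩)
    exact (cut_contra hV hcut hdef hnf).elim

lemma exists_full (hcut : ∀ Q ⊆ Tslots dl, fvQ r dl p Q ≤ m * Q.card) :
    ∃ A : J → Finset ℕ, (∀ j, A j ⊆ Ei r dl j) ∧ (∀ j, (A j).card = p j) ∧
      (∀ t, load A t ≤ m) := by
  suffices h : ∀ D (A : J → Finset ℕ), PValid r dl p m A → (∑ j, p j) ≤ total A + D →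
      ∃ B, PValid r dl p m B ∧ ∀ j, (B j).card = p j by
    have h0 : PValid r dl p m (fun _ => (∅ : Finset ℕ)) := by
      refine ⟨fun j => empty_subset _, fun j => by simp, fun t => ?_⟩
      unfold load
      simp
    obtain ⟨B, hB, hBc⟩ := h (∑ j, p j) (fun _ => ∅) h0 (by unfold total; simp)
    exact ⟨B, hB.1, hBc, hB.2.2⟩
  intro D
  induction D with
  | zero =>
    intro A hV hle
    refine ⟨A, hV, ?_⟩
    intro j
    by_contra hne
    have hlt : (A j).card < p j := lt_of_le_of_ne (hV.2.1 j) hne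
    have : total A < ∑ j, p j :=
      Finset.sum_lt_sum (fun i _ => hV.2.1 i) ⟨j, mem_univ j, hlt⟩
    omega
  | succ D IH =>
    intro A hV hle
    by_cases hall : ∀ j, (A j).card = p j
    · exact ⟨A, hV, hall⟩
    · push_neg at hall
      obtain ⟨j0, hj0⟩ := hall
      have hdef : (A j0).card < p j0 := lt_of_le_of_ne (hV.2.1 j0) hj0
      obtain ⟨B, hBV, hBt⟩ := one_step hV hcut ⟨j0, hdef⟩
      exact IH B hBV (by omega)


lemma prod_filter_card {m : ℕ} (T : Finset ℕ) (P : Fin m → ℕ → Prop) [∀ k t, Decidable (P k t)] :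
    ((univ ×ˢ T).filter fun kt : Fin m × ℕ => P kt.1 kt.2).card
      = ∑ t ∈ T, (univ.filter fun k => P k t).card := by
  calc ((univ ×ˢ T).filter fun kt : Fin m × ℕ => P kt.1 kt.2).card
      = ∑ x ∈ univ ×ˢ T, if P x.1 x.2 then 1 else 0 := Finset.card_filter _ _
    _ = ∑ t ∈ T, ∑ k ∈ univ, if P k t then 1 else 0 := by rw [Finset.sum_product_right]
    _ = ∑ t ∈ T, (univ.filter fun k => P k t).card :=
        Finset.sum_congr rfl (fun t _ => (Finset.card_filter _ _).symm)

lemma exists_feasible (hcut : ∀ Q ⊆ Tslots dl, fvQ r dl p Q ≤ m * Q.card) :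
    ∃ S : Fin m → ℕ → Option J, Feasible r dl p m S := by
  classical
  obtain ⟨A, hsub, hcard, hload⟩ := exists_full (r := r) (dl := dl) (p := p) (m := m) hcut
  set Jt : ℕ → Finset J := fun t => univ.filter fun j => t ∈ A j with hJtdef
  have hJt : ∀ t, (Jt t).card ≤ m := fun t => hload t
  set S : Fin m → ℕ → Option J := fun k t =>
    if h : (k : ℕ) < (Jt t).card then some (((Jt t).equivFin.symm ⟨(k : ℕ), h⟩).1) else none
    with hSdef
  have hSmem : ∀ (k : Fin m) (t : ℕ) (j : J), S k t = some j
      ↔ ∃ h : j ∈ Jt t, (((Jt t).equivFin ⟨j, h⟩ : Fin (Jt t).card) : ℕ) = (k : ℕ) := by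
    intro k t j
    rw [hSdef]
    simp only
    constructor
    · intro hS
      by_cases h : (k : ℕ) < (Jt t).card
      · rw [dif_pos h] at hS
        have hj := Option.some_inj.1 hS
        have hmem : j ∈ Jt t := by rw [← hj]; exact ((Jt t).equivFin.symm ⟨(k : ℕ), h⟩).2
        refine ⟨hmem, ?_⟩
        have hsub2 : (⟨j, hmem⟩ : {x // x ∈ Jt t}) = (Jt t).equivFin.symm ⟨(k : ℕ), h⟩ :=
          Subtype.ext hj.symm
        rw [hsub2, Equiv.apply_symm_apply]
      · rw [dif_neg h] at hS
        exact absurd hS (by simp)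
    · rintro ⟨hj, hk⟩
      have h : (k : ℕ) < (Jt t).card := by
        rw [← hk]; exact ((Jt t).equivFin ⟨j, hj⟩).isLt
      rw [dif_pos h]
      have : (⟨(k : ℕ), h⟩ : Fin (Jt t).card) = (Jt t).equivFin ⟨j, hj⟩ :=
        Fin.ext hk.symm
      rw [this, Equiv.symm_apply_apply]
  have hmemA : ∀ {t : ℕ} {j : J}, j ∈ Jt t ↔ t ∈ A j := by
    intro t j; rw [hJtdef]; simp
  refine ⟨S, ?_, ?_, ?_⟩
  · intro k t j hS
    obtain ⟨hj, -⟩ := (hSmem k t j).1 hS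
    exact hsub j (hmemA.1 hj)
  · intro j
    rw [prod_filter_card (Tslots dl) (fun k t => S k t = some j)]
    have hpt : ∀ t, (univ.filter fun k : Fin m => S k t = some j).card
        = if t ∈ A j then 1 else 0 := by
      intro t
      by_cases htA : t ∈ A j
      · rw [if_pos htA]
        have hj : j ∈ Jt t := hmemA.2 htA
        have him : (((Jt t).equivFin ⟨j, hj⟩ : Fin (Jt t).card) : ℕ) < m :=
          lt_of_lt_of_le ((Jt t).equivFin ⟨j, hj⟩).isLt (hJt t)
        have hset : (univ.filter fun k : Fin m => S k t = some j)
            = {(⟨(((Jt t).equivFin ⟨j, hj⟩ : Fin (Jt t).card) : ℕ), him⟩ : Fin m)} := by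
          ext k
          rw [mem_filter, mem_singleton, hSmem k t j]
          constructor
          · rintro ⟨-, hm, hk⟩
            apply Fin.ext
            simp only
            rw [← hk]
          · intro hk
            refine ⟨mem_univ _, hj, ?_⟩
            rw [hk]
        rw [hset, card_singleton]
      · rw [if_neg htA, Finset.card_eq_zero, Finset.filter_eq_empty_iff]
        intro k _
        rw [hSmem k t j]
        rintro ⟨hj, -⟩
        exact htA (hmemA.1 hj)
    calc ∑ t ∈ Tslots dl, (univ.filter fun k : Fin m => S k t = some j).card
        = ∑ t ∈ Tslots dl, if t ∈ A j then 1 else 0 :=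
          Finset.sum_congr rfl (fun t _ => hpt t)
      _ = ((Tslots dl).filter fun t => t ∈ A j).card := (Finset.card_filter _ _).symm
      _ = (A j).card := by
          congr 1
          ext u
          simp only [mem_filter, and_iff_right_iff_imp]
          intro hu
          exact Ei_subset_Tslots r dl j (hsub j hu)
      _ = p j := hcard j
  · intro t j k k' hS hS'
    obtain ⟨hj, hk⟩ := (hSmem k t j).1 hS
    obtain ⟨hj', hk'⟩ := (hSmem k' t j).1 hS'
    apply Fin.ext
    rw [← hk, ← hk']


lemma feasible_cut {S : Fin m → ℕ → Option J} (hF : Feasible r dl p m S) :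
    ∀ Q ⊆ Tslots dl, fvQ r dl p Q ≤ m * Q.card := by
  classical
  obtain ⟨h1, h2, h3⟩ := hF
  intro Q hQ
  set c : J → ℕ → ℕ := fun j t => (univ.filter fun k => S k t = some j).card with hc
  have hc1 : ∀ j t, c j t ≤ 1 := by
    intro j t
    apply Finset.card_le_one.2
    intro a ha b hb
    rw [mem_filter] at ha hb
    exact h3 t j a b ha.2 hb.2
  have hpj : ∀ j, ∑ t ∈ Tslots dl, c j t = p j := by
    intro j
    rw [← h2 j, prod_filter_card (Tslots dl) (fun k t => S k t = some j)]
  have hEc : ∀ j t, c j t ≠ 0 → t ∈ Ei r dl j := by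
    intro j t hct
    obtain ⟨k, hk⟩ := Finset.card_pos.1 (Nat.pos_of_ne_zero hct)
    rw [mem_filter] at hk
    exact h1 k t j hk.2
  have hfvJ : ∀ j, fvJ r dl p j Q ≤ ∑ t ∈ Q, c j t := by
    intro j
    have hsplit : ∑ t ∈ Tslots dl \ Q, c j t + ∑ t ∈ Q, c j t = p j := by
      rw [Finset.sum_sdiff hQ]
      exact hpj j
    have hout : ∑ t ∈ Tslots dl \ Q, c j t ≤ (Ei r dl j \ Q).card := by
      calc ∑ t ∈ Tslots dl \ Q, c j t
          ≤ ∑ t ∈ Tslots dl \ Q, (if t ∈ Ei r dl j \ Q then 1 else 0) := by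
            apply Finset.sum_le_sum
            intro t ht
            by_cases hz : c j t = 0
            · omega
            · have htE : t ∈ Ei r dl j \ Q := by
                rw [mem_sdiff]
                exact ⟨hEc j t hz, (mem_sdiff.1 ht).2⟩
              rw [if_pos htE]
              exact hc1 j t
        _ = ((Tslots dl \ Q).filter fun t => t ∈ Ei r dl j \ Q).card :=
            (Finset.card_filter _ _).symm
        _ ≤ (Ei r dl j \ Q).card := by
            apply card_le_card
            intro t ht
            exact (mem_filter.1 ht).2
    unfold fvJ
    omega
  have hslot : ∀ t, ∑ j, c j t ≤ m := by
    intro t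
    have hdisj : ((univ : Finset J) : Set J).PairwiseDisjoint
        (fun j => univ.filter fun k : Fin m => S k t = some j) := by
      intro a _ b _ hab
      apply Finset.disjoint_left.2
      intro k hka hkb
      rw [mem_filter] at hka hkb
      exact hab (Option.some_inj.1 ((hka.2).symm.trans hkb.2))
    calc ∑ j, c j t = (univ.biUnion fun j => univ.filter fun k : Fin m => S k t = some j).card :=
          (Finset.card_biUnion hdisj).symm
      _ ≤ (univ : Finset (Fin m)).card := card_le_card (subset_univ _)
      _ = m := by rw [card_univ, Fintype.card_fin]
  calc fvQ r dl p Q = ∑ j, fvJ r dl p j Q := rfl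
    _ ≤ ∑ j, ∑ t ∈ Q, c j t := Finset.sum_le_sum (fun j _ => hfvJ j)
    _ = ∑ t ∈ Q, ∑ j, c j t := Finset.sum_comm
    _ ≤ ∑ t ∈ Q, m := Finset.sum_le_sum (fun t _ => hslot t)
    _ = m * Q.card := by rw [Finset.sum_const, smul_eq_mul, mul_comm]

end SchedAux

/-- The instance admits a feasible schedule on `m` processors if and only if
`fv(Q) ≤ m·|Q|` for every subset `Q` of the time horizon. -/
theorem feasibility_characterization (J : Type) [Fintype J] [DecidableEq J]
    (r dl p : J → ℕ) (hrd : ∀ j, r j ≤ dl j) (hp : ∀ j, p j ≤ dl j - r j + 1)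
    (m : ℕ) (hm : 1 ≤ m) :
    (∃ S : Fin m → ℕ → Option J, Feasible r dl p m S) ↔
    (∀ Q ⊆ Tslots dl, fvQ r dl p Q ≤ m * Q.card) := by
  constructor
  · rintro ⟨S, hS⟩
    exact SchedAux.feasible_cut hS
  · intro hcut
    exact SchedAux.exists_feasible hcut
end
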